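/- arXiv:2009.14560 — 7 statements merged into one kernel-verified Lean document; each statement's English description precedes it below -/
import Mathlib

section
/- Let n ≥ 3 and let P be a set of n points in the plane in strictly convex position. Then every intersecting family of triangles spanned by P has size at most F(n) = C(⌈(n+2)/2⌉, 3) + C(⌊(n+2)/2⌋, 3). -/
/-- A finite set of points in the plane is in strictly convex position if no three of its
points are collinear and every point of it is an extreme point of its convex hull. -/
def StrictConvexPos (P : Finset (ℝ × ℝ)) : Prop :=
  (∀ a ∈ P, ∀ b ∈ P, ∀ c ∈ P, a ≠ b → a ≠ c → b ≠ c →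
      ¬ Collinear ℝ ({a, b, c} : Set (ℝ × ℝ))) ∧
  ∀ p ∈ P, p ∈ Set.extremePoints ℝ (convexHull ℝ (P : Set (ℝ × ℝ)))

/-- `F n = C(⌈(n+2)/2⌉, 3) + C(⌊(n+2)/2⌋, 3)`. -/
def F (n : ℕ) : ℕ := Nat.choose ((n + 3) / 2) 3 + Nat.choose ((n + 2) / 2) 3

/-!
At each point `x` of `P` all other points lie in an open half-plane, so the directions from `x`
are linearly ordered by an angular coordinate. Any two triangles of the family share an interior
point, so at `x` the first edge of every triangle comes strictly before the last edge of every
other one; hence there is a threshold direction at `x` that the two edges of each triangle at `x`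
straddle. Orienting `x → y` when `y` is before the threshold of `x` but `x` is not before that of
`y` turns every triangle of the family into a directed 3-cycle of an oriented graph on `P`.
Completed to a tournament with out-degrees `d v` (which sum to `C(n, 2)`), the cyclic triples and
the triples `{v} ∪ S` with `v → S` are disjoint, so there are at most `C(n, 3) - ∑ C(d v, 2)`
cyclic triples, and the convexity of `C(·, 2)` bounds this by `F n`.
-/

namespace IntersectingTriangles

open Finset

lemma cast_choose_three (n : ℕ) : (n.choose 3 : ℚ) = n * (n - 1) * (n - 2) / 6 := by
  induction n with
  | zero => simp
  | succ n ih =>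
    rw [Nat.choose_succ_succ', Nat.cast_add, ih, Nat.cast_choose_two]
    push_cast
    ring

/-- Tangent line of the convex function `d ↦ C(d, 2)` at an integer point. -/
lemma tangent_le_cast_choose_two (k : ℤ) (d : ℕ) :
    k * d - k * (k + 1) / 2 ≤ (d.choose 2 : ℚ) := by
  have h : (0 : ℤ) ≤ (d - k) * (d - k - 1) := by
    rcases le_or_gt (d - k) 0 with h | h <;> nlinarith
  rw [Nat.cast_choose_two]
  have h' : (0 : ℚ) ≤ (d - k) * (d - k - 1) := by exact_mod_cast h
  linarith

theorem choose_three_le_F_add_sum_choose_two {ι : Type*} (V : Finset ι) (d : ι → ℕ)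
    (hd : ∑ v ∈ V, d v = (#V).choose 2) :
    (#V).choose 3 ≤ F #V + ∑ v ∈ V, (d v).choose 2 := by
  have hsum (k : ℤ) : k * (#V).choose 2 - #V * (k * (k + 1) / 2) ≤
      ∑ v ∈ V, ((d v).choose 2 : ℚ) := by
    calc (k : ℚ) * (#V).choose 2 - #V * (k * (k + 1) / 2)
        = ∑ v ∈ V, (k * d v - k * (k + 1) / 2 : ℚ) := by
          rw [sum_sub_distrib, ← mul_sum, ← Nat.cast_sum, hd, sum_const, nsmul_eq_mul]
      _ ≤ _ := sum_le_sum fun v _ => tangent_le_cast_choose_two k (d v)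
  rw [← Nat.cast_le (α := ℚ)]
  push_cast
  rw [Nat.cast_choose_two] at hsum
  obtain ⟨m, hm | hm⟩ := Nat.even_or_odd' #V
  · have hF : F #V = (m + 1).choose 3 + (m + 1).choose 3 := by
      rw [F, hm, show (2 * m + 3) / 2 = m + 1 by omega, show (2 * m + 2) / 2 = m + 1 by omega]
    have := hsum (m - 1)
    rw [hF, hm] at *
    push_cast [cast_choose_three] at *
    nlinarith
  · have hF : F #V = (m + 2).choose 3 + (m + 1).choose 3 := by
      rw [F, hm, show (2 * m + 1 + 3) / 2 = m + 2 by omega,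
        show (2 * m + 1 + 2) / 2 = m + 1 by omega]
    have := hsum m
    rw [hF, hm] at *
    push_cast [cast_choose_three] at *
    nlinarith

section Tournament

variable {α : Type*}

lemma exists_tournament_le {r : α → α → Prop} (hasymm : ∀ a b, r a b → ¬ r b a) :
    ∃ o : α → α → Prop, (∀ a b, r a b → o a b) ∧ (∀ a b, o a b → ¬ o b a) ∧
      ∀ a b, a ≠ b → o a b ∨ o b a := by
  refine ⟨fun a b => r a b ∨ (¬ r b a ∧ WellOrderingRel a b), fun a b h => Or.inl h, ?_, ?_⟩
  · rintro a b (h | ⟨h, hw⟩) (h' | ⟨h', hw'⟩)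
    exacts [hasymm a b h h', h' h, h h', asymm hw hw']
  · intro a b hab
    rcases trichotomous_of WellOrderingRel a b with h | h | h
    · by_cases hba : r b a <;> tauto
    · exact absurd h hab
    · by_cases hab : r a b <;> tauto

variable [DecidableEq α]

lemma exists_mem_triple_rel {o : α → α → Prop} {a b c : α} (hab : o a b) (hbc : o b c)
    (hca : o c a) : ∀ v ∈ ({a, b, c} : Finset α), ∃ w ∈ ({a, b, c} : Finset α), o w v := by
  simp only [mem_insert, mem_singleton]
  rintro v (rfl | rfl | rfl)
  exacts [⟨_, by simp, hca⟩, ⟨_, by simp, hab⟩, ⟨_, by simp, hbc⟩]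

/-- A triple `insert v S` with `v → S` is not a 3-cycle and determines `v`, so the 3-cycles and the
"cherries" `(v, S)` inject disjointly into the 3-subsets of `V`. -/
theorem card_add_sum_choose_two_le {V : Finset α} {o : α → α → Prop} [DecidableRel o]
    (hasymm : ∀ a b, o a b → ¬ o b a) {𝓕 : Finset (Finset α)} (h𝓕V : ∀ T ∈ 𝓕, T ⊆ V)
    (hcyc : ∀ T ∈ 𝓕, ∃ a b c, T = {a, b, c} ∧ o a b ∧ o b c ∧ o c a) :
    #𝓕 + ∑ v ∈ V, (#(V.filter (o v))).choose 2 ≤ (#V).choose 3 := by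
  have hirrefl (a : α) : ¬ o a a := fun h => hasymm a a h h
  have hne {a b : α} (h : o a b) : a ≠ b := by rintro rfl; exact hirrefl a h
  set cherries := V.sigma fun v => (V.filter (o v)).powersetCard 2
  have mem_cherries {v : α} {S : Finset α} : ⟨v, S⟩ ∈ cherries ↔
      v ∈ V ∧ (∀ w ∈ S, w ∈ V ∧ o v w) ∧ #S = 2 := by
    simp [cherries, subset_iff]
  have hnot_mem {v S} (h : ⟨v, S⟩ ∈ cherries) : v ∉ S :=
    fun hv => hirrefl v (((mem_cherries.1 h).2.1 v hv).2)
  have hinj : Set.InjOn (fun s : (_ : α) × Finset α => insert s.1 s.2) cherries := by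
    rintro ⟨v, S⟩ hS ⟨v', S'⟩ hS' (h : insert v S = insert v' S')
    obtain rfl : v = v' := by
      by_contra hne
      have hvS' : v ∈ S' := by
        have := mem_insert_self v S; rw [h] at this; simpa [hne] using this
      have hv'S : v' ∈ S := by
        have := mem_insert_self v' S'; rw [← h] at this; simpa [Ne.symm hne] using this
      exact hasymm v v' ((mem_cherries.1 hS).2.1 v' hv'S).2 ((mem_cherries.1 hS').2.1 v hvS').2
    rw [← erase_insert (hnot_mem hS), h, erase_insert (hnot_mem hS')]
  have hdisj : Disjoint 𝓕 (cherries.image fun s => insert s.1 s.2) := by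
    rw [disjoint_right]
    rintro _ hT hT𝓕
    obtain ⟨⟨v, S⟩, hS, rfl⟩ := mem_image.1 hT
    obtain ⟨a, b, c, hTe, hab, hbc, hca⟩ := hcyc _ hT𝓕
    obtain ⟨w, hw, hwv⟩ := exists_mem_triple_rel hab hbc hca v (hTe ▸ mem_insert_self v S)
    have hwS : w ∈ S := by
      rw [← hTe] at hw
      exact (mem_insert.1 hw).resolve_left (hne hwv)
    exact hasymm v w ((mem_cherries.1 hS).2.1 w hwS).2 hwv
  have hsub : 𝓕 ∪ cherries.image (fun s => insert s.1 s.2) ⊆ V.powersetCard 3 := by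
    intro T hT
    rw [mem_powersetCard]
    rcases mem_union.1 hT with hT | hT
    · obtain ⟨a, b, c, rfl, hab, hbc, hca⟩ := hcyc T hT
      exact ⟨h𝓕V _ hT, card_eq_three.2 ⟨a, b, c, hne hab, (hne hca).symm, hne hbc, rfl⟩⟩
    · obtain ⟨⟨v, S⟩, hS, rfl⟩ := mem_image.1 hT
      obtain ⟨hv, hSV, hS2⟩ := mem_cherries.1 hS
      refine ⟨insert_subset hv fun w hw => (hSV w hw).1, ?_⟩
      rw [card_insert_of_notMem (hnot_mem hS), hS2]
  calc #𝓕 + ∑ v ∈ V, (#(V.filter (o v))).choose 2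
      = #𝓕 + #(cherries.image fun s => insert s.1 s.2) := by
        rw [card_image_of_injOn hinj, card_sigma]
        simp only [card_powersetCard]
    _ = #(𝓕 ∪ cherries.image fun s => insert s.1 s.2) := (card_union_of_disjoint hdisj).symm
    _ ≤ #(V.powersetCard 3) := card_le_card hsub
    _ = (#V).choose 3 := card_powersetCard 3 V

theorem sum_card_filter_eq_choose_two (V : Finset α) {o : α → α → Prop} [DecidableRel o]
    (hasymm : ∀ a b, o a b → ¬ o b a) (htotal : ∀ a b, a ≠ b → o a b ∨ o b a) :
    ∑ v ∈ V, #(V.filter (o v)) = (#V).choose 2 := by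
  have hdeg : ∀ v ∈ V, #(V.filter (o v)) + #(V.filter (o · v)) = #V - 1 := by
    intro v hv
    rw [← card_union_of_disjoint (disjoint_filter.2 fun w _ h => hasymm v w h), ← filter_or,
      ← card_erase_of_mem hv]
    congr 1
    ext w
    simp only [mem_filter, mem_erase]
    constructor
    · rintro ⟨hw, h | h⟩ <;> exact ⟨by rintro rfl; exact hasymm w w h h, hw⟩
    · exact fun ⟨hwv, hw⟩ => ⟨hw, htotal v w (Ne.symm hwv)⟩
  have hin : ∑ v ∈ V, #(V.filter (o · v)) = ∑ v ∈ V, #(V.filter (o v)) :=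
    (sum_card_bipartiteAbove_eq_sum_card_bipartiteBelow (r := o)).symm
  have h2 : 2 * ∑ v ∈ V, #(V.filter (o v)) = #V * (#V - 1) := by
    rw [two_mul]
    nth_rw 2 [← hin]
    rw [← sum_add_distrib, sum_congr rfl hdeg, sum_const, smul_eq_mul]
  rw [Nat.choose_two_right, ← h2, Nat.mul_div_cancel_left _ two_pos]

theorem card_le_F_of_forall_cycle {V : Finset α} {r : α → α → Prop}
    (hasymm : ∀ a b, r a b → ¬ r b a) {𝓕 : Finset (Finset α)} (h𝓕V : ∀ T ∈ 𝓕, T ⊆ V)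
    (hcyc : ∀ T ∈ 𝓕, ∃ a b c, T = {a, b, c} ∧ r a b ∧ r b c ∧ r c a) :
    #𝓕 ≤ F #V := by
  classical
  obtain ⟨o, hro, hoasymm, hototal⟩ := exists_tournament_le hasymm
  have hcyc' : ∀ T ∈ 𝓕, ∃ a b c, T = {a, b, c} ∧ o a b ∧ o b c ∧ o c a := by
    intro T hT
    obtain ⟨a, b, c, hT, hab, hbc, hca⟩ := hcyc T hT
    exact ⟨a, b, c, hT, hro a b hab, hro b c hbc, hro c a hca⟩
  have h₁ := card_add_sum_choose_two_le hoasymm h𝓕V hcyc'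
  have h₂ := choose_three_le_F_add_sum_choose_two V _
    (sum_card_filter_eq_choose_two V hoasymm hototal)
  omega

end Tournament

theorem lt_of_mem_interior_convexHull {E : Type*} [AddCommGroup E] [TopologicalSpace E]
    [ContinuousAdd E] [Module ℝ E] [ContinuousSMul ℝ E] {ℓ : StrongDual ℝ E} (hℓ : ℓ ≠ 0)
    {S : Set E} {r : ℝ} (hS : ∀ w ∈ S, r ≤ ℓ w) {p : E} (hp : p ∈ interior (convexHull ℝ S)) :
    r < ℓ p := by
  have hsub : convexHull ℝ S ⊆ ℓ ⁻¹' Set.Ici r :=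
    convexHull_min hS ((convex_Ici r).linear_preimage ℓ.toLinearMap)
  have := (ℓ.isOpenMap_of_ne_zero hℓ).interior_preimage_subset_preimage_interior
    (interior_mono hsub hp)
  rwa [interior_Ici] at this

theorem exists_forall_lt_of_mem_extremePoints {E : Type*} [AddCommGroup E] [TopologicalSpace E]
    [IsTopologicalAddGroup E] [Module ℝ E] [ContinuousSMul ℝ E] [LocallyConvexSpace ℝ E]
    [T2Space E] {P : Finset E} {x : E} (hx : x ∈ (convexHull ℝ (P : Set E)).extremePoints ℝ) :
    ∃ f : StrongDual ℝ E, ∀ y ∈ P, y ≠ x → f x < f y := by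
  have hx' : x ∉ convexHull ℝ ((P : Set E) \ {x}) := fun h =>
    ((convex_convexHull ℝ _).mem_extremePoints_iff_mem_sdiff_convexHull_sdiff.1 hx).2
      (convexHull_mono (Set.sdiff_subset_sdiff_left (subset_convexHull ℝ _)) h)
  obtain ⟨f, s, hfx, hf⟩ := geometric_hahn_banach_point_closed (convex_convexHull ℝ _)
    (P.finite_toSet.sdiff.isCompact_convexHull ℝ).isClosed hx'
  exact ⟨f, fun y hy hyx => hfx.trans (hf y (subset_convexHull ℝ _ ⟨hy, hyx⟩))⟩

def cross (v : ℝ × ℝ) : StrongDual ℝ (ℝ × ℝ) :=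
  v.1 • ContinuousLinearMap.snd ℝ ℝ ℝ - v.2 • ContinuousLinearMap.fst ℝ ℝ ℝ

@[simp]
lemma cross_apply (v w : ℝ × ℝ) : cross v w = v.1 * w.2 - v.2 * w.1 := by
  simp [cross]

lemma cross_ne_zero {v : ℝ × ℝ} (hv : v ≠ 0) : cross v ≠ 0 := by
  intro h
  have h' : cross v (-v.2, v.1) = 0 := by rw [h]; rfl
  simp only [cross_apply] at h'
  have h₁ : v.1 = 0 := by nlinarith [sq_nonneg v.1, sq_nonneg v.2]
  have h₂ : v.2 = 0 := by nlinarith [sq_nonneg v.1, sq_nonneg v.2]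
  exact hv (Prod.ext h₁ h₂)

lemma cross_comm (v w : ℝ × ℝ) : cross v w = -cross w v := by
  simp only [cross_apply]; ring

/-- With `u = (f (1, 0), f (0, 1))` the normal of `f`, `det (u, v) / f v` is a coordinate on the
open half-plane `0 < f` that increases counterclockwise. -/
noncomputable def angleCoord (f : StrongDual ℝ (ℝ × ℝ)) (v : ℝ × ℝ) : ℝ :=
  cross (f (1, 0), f (0, 1)) v / f v

theorem angleCoord_lt_angleCoord {f : StrongDual ℝ (ℝ × ℝ)} {v w : ℝ × ℝ} (hv : 0 < f v)
    (hw : 0 < f w) (h : 0 < cross v w) : angleCoord f v < angleCoord f w := by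
  have hf (u : ℝ × ℝ) : f u = f (1, 0) * u.1 + f (0, 1) * u.2 := by
    conv_lhs => rw [show u = u.1 • ((1 : ℝ), (0 : ℝ)) + u.2 • ((0 : ℝ), (1 : ℝ)) by ext <;> simp]
    rw [map_add, map_smul, map_smul, smul_eq_mul, smul_eq_mul, mul_comm u.1, mul_comm u.2]
  have hnormal : 0 < f (1, 0) ^ 2 + f (0, 1) ^ 2 := by
    by_contra! h0
    have h1 : f (1, 0) = 0 := by nlinarith
    have h2 : f (0, 1) = 0 := by nlinarith
    simp [hf v, h1, h2] at hv
  rw [angleCoord, angleCoord, div_lt_div_iff₀ hv hw]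
  have key : cross (f (1, 0), f (0, 1)) w * f v - cross (f (1, 0), f (0, 1)) v * f w =
      (f (1, 0) ^ 2 + f (0, 1) ^ 2) * cross v w := by
    simp only [cross_apply, hf v, hf w]; ring
  nlinarith [mul_pos hnormal h]

theorem cross_sub_ne_zero_of_interior_nonempty {x y z : ℝ × ℝ} (hxy : x ≠ y)
    (h : (interior (convexHull ℝ ({x, y, z} : Set (ℝ × ℝ)))).Nonempty) :
    cross (y - x) (z - x) ≠ 0 := by
  intro h0
  obtain ⟨p, hp⟩ := h
  have hℓ : cross (y - x) ≠ 0 := cross_ne_zero (sub_ne_zero.2 hxy.symm)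
  have hS : ∀ w ∈ ({x, y, z} : Set (ℝ × ℝ)), cross (y - x) w = cross (y - x) x := by
    simp only [cross_apply, Prod.fst_sub, Prod.snd_sub] at h0 ⊢
    rintro w (rfl | rfl | rfl) <;> first | ring1 | linear_combination h0
  have h₁ := lt_of_mem_interior_convexHull hℓ (fun w hw => (hS w hw).ge) hp
  have h₂ := lt_of_mem_interior_convexHull (neg_ne_zero.2 hℓ) (r := -cross (y - x) x)
    (fun w hw => by rw [neg_apply, hS w hw]) hp
  rw [neg_apply] at h₂
  linarith

theorem exists_eq_triple_cross_pos {T : Finset (ℝ × ℝ)} (hT : #T = 3)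
    (hint : (interior (convexHull ℝ (T : Set (ℝ × ℝ)))).Nonempty) {x : ℝ × ℝ} (hx : x ∈ T) :
    ∃ y z, T = {x, y, z} ∧ 0 < cross (y - x) (z - x) := by
  obtain ⟨y, z, -, hyz⟩ := card_eq_two.1 (by rw [card_erase_of_mem hx, hT] : #(T.erase x) = 2)
  have hTe : T = {x, y, z} := by rw [← insert_erase hx, hyz]
  have hyx : y ≠ x := ne_of_mem_erase (by rw [hyz]; exact mem_insert_self y {z})
  rw [hTe, coe_insert, coe_pair] at hint
  rcases (cross_sub_ne_zero_of_interior_nonempty hyx.symm hint).lt_or_gt with h | h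
  · exact ⟨z, y, by rw [hTe, pair_comm], by rw [cross_comm]; linarith⟩
  · exact ⟨y, z, hTe, h⟩

lemma ne_of_cross_sub_pos {x y z : ℝ × ℝ} (h : 0 < cross (y - x) (z - x)) : y ≠ x ∧ z ≠ x := by
  constructor <;> rintro rfl <;> simp at h

theorem cross_pos_of_mem_interior {x y z p : ℝ × ℝ} (h : 0 < cross (y - x) (z - x))
    (hp : p ∈ interior (convexHull ℝ ({x, y, z} : Set (ℝ × ℝ)))) :
    0 < cross (y - x) (p - x) ∧ 0 < cross (p - x) (z - x) := by
  have hyx : y - x ≠ 0 := sub_ne_zero.2 (ne_of_cross_sub_pos h).1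
  have hxz : x - z ≠ 0 := sub_ne_zero.2 (ne_of_cross_sub_pos h).2.symm
  simp only [cross_apply, Prod.fst_sub, Prod.snd_sub] at h ⊢
  constructor
  · have := lt_of_mem_interior_convexHull (cross_ne_zero hyx) (r := cross (y - x) x) (by
      simp only [cross_apply, Prod.fst_sub, Prod.snd_sub]
      rintro w (rfl | rfl | rfl) <;> first | exact le_of_eq (by ring1) | linear_combination h) hp
    simp only [cross_apply, Prod.fst_sub, Prod.snd_sub] at this
    linear_combination this
  · have := lt_of_mem_interior_convexHull (cross_ne_zero hxz) (r := cross (x - z) x) (by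
      simp only [cross_apply, Prod.fst_sub, Prod.snd_sub]
      rintro w (rfl | rfl | rfl) <;> first | exact le_of_eq (by ring1) | linear_combination h) hp
    simp only [cross_apply, Prod.fst_sub, Prod.snd_sub] at this
    linear_combination this

section Family

variable {P : Finset (ℝ × ℝ)} {𝓕 : Finset (Finset (ℝ × ℝ))} {f : ℝ × ℝ → StrongDual ℝ (ℝ × ℝ)}

/-- Seen from `x`, in the angular coordinate of `f x`, the point `y` comes strictly before the
last vertex of every triangle of `𝓕` at `x` (`x` itself is excluded, its coordinate is `0 / 0`). -/
def Precedes (𝓕 : Finset (Finset (ℝ × ℝ))) (f : ℝ × ℝ → StrongDual ℝ (ℝ × ℝ))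
    (x y : ℝ × ℝ) : Prop :=
  ∀ T ∈ 𝓕, x ∈ T → ∃ w ∈ T.erase x, angleCoord (f x) (y - x) < angleCoord (f x) (w - x)

def IsArc (𝓕 : Finset (Finset (ℝ × ℝ))) (f : ℝ × ℝ → StrongDual ℝ (ℝ × ℝ))
    (x y : ℝ × ℝ) : Prop :=
  Precedes 𝓕 f x y ∧ ¬ Precedes 𝓕 f y x

variable (hf : ∀ x ∈ P, ∀ y ∈ P, y ≠ x → f x x < f x y) (h𝓕 : ∀ T ∈ 𝓕, T ⊆ P ∧ #T = 3)
  (hint : ∀ T₁ ∈ 𝓕, ∀ T₂ ∈ 𝓕, (interior (convexHull ℝ (T₁ : Set (ℝ × ℝ))) ∩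
    interior (convexHull ℝ (T₂ : Set (ℝ × ℝ)))).Nonempty)
include hf h𝓕 hint

/-- Any triangle `T'` of `𝓕` at `x` shares an interior point `p` with `T`, which lies after the
first edge `xy` of `T` and before the last edge of `T'`. -/
theorem precedes_and_not_precedes {T : Finset (ℝ × ℝ)} (hT : T ∈ 𝓕) {x y z : ℝ × ℝ}
    (hTe : T = {x, y, z}) (hxyz : 0 < cross (y - x) (z - x)) :
    Precedes 𝓕 f x y ∧ ¬ Precedes 𝓕 f x z := by
  have hTP : ∀ w ∈ ({x, y, z} : Finset (ℝ × ℝ)), w ∈ P := hTe ▸ (h𝓕 T hT).1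
  have hx : x ∈ P := hTP x (by simp)
  obtain ⟨hyx, hzx⟩ := ne_of_cross_sub_pos hxyz
  have hpos : ∀ w ∈ P, w ≠ x → 0 < f x (w - x) := fun w hw hwx => by
    rw [map_sub, sub_pos]; exact hf x hx w hw hwx
  have hfx : f x ≠ 0 := fun h0 => by simpa [h0] using hf x hx y (hTP y (by simp)) hyx
  have hpos_interior : ∀ T' ∈ 𝓕, x ∈ T' → ∀ p ∈ interior (convexHull ℝ (T' : Set (ℝ × ℝ))),
      0 < f x (p - x) := by
    intro T' hT' hxT' p hp
    rw [map_sub, sub_pos]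
    refine lt_of_mem_interior_convexHull hfx (fun w hw => ?_) hp
    rcases eq_or_ne w x with rfl | hwx
    · exact le_rfl
    · exact (hf x hx w ((h𝓕 T' hT').1 hw) hwx).le
  have hyz : angleCoord (f x) (y - x) < angleCoord (f x) (z - x) :=
    angleCoord_lt_angleCoord (hpos y (hTP y (by simp)) hyx) (hpos z (hTP z (by simp)) hzx) hxyz
  refine ⟨fun T' hT' hxT' => ?_, fun h => ?_⟩
  · obtain ⟨y', z', hT'e, h'⟩ :=
      exists_eq_triple_cross_pos (h𝓕 T' hT').2 (by simpa using hint T' hT' T' hT') hxT'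
    obtain ⟨p, hpT, hpT'⟩ := hint T hT T' hT'
    have hp := hpos_interior T' hT' hxT' p hpT'
    have hz'x := (ne_of_cross_sub_pos h').2
    rw [hTe, coe_insert, coe_pair] at hpT
    rw [hT'e, coe_insert, coe_pair] at hpT'
    refine ⟨z', mem_erase.2 ⟨hz'x, by simp [hT'e]⟩, ?_⟩
    calc angleCoord (f x) (y - x)
        < angleCoord (f x) (p - x) := angleCoord_lt_angleCoord (hpos y (hTP y (by simp)) hyx) hp
          (cross_pos_of_mem_interior hxyz hpT).1
      _ < angleCoord (f x) (z' - x) :=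
          angleCoord_lt_angleCoord hp (hpos z' ((h𝓕 T' hT').1 (by simp [hT'e])) hz'x)
            (cross_pos_of_mem_interior h' hpT').2
  · obtain ⟨w, hw, hlt⟩ := h T hT (by simp [hTe])
    rw [hTe, mem_erase, mem_insert, mem_insert, mem_singleton] at hw
    rcases hw with ⟨hwx, rfl | rfl | rfl⟩
    · exact hwx rfl
    · exact lt_asymm hyz hlt
    · exact lt_irrefl _ hlt

theorem exists_eq_triple_isArc {T : Finset (ℝ × ℝ)} (hT : T ∈ 𝓕) :
    ∃ a b c, T = {a, b, c} ∧ IsArc 𝓕 f a b ∧ IsArc 𝓕 f b c ∧ IsArc 𝓕 f c a := by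
  obtain ⟨x, hx⟩ : T.Nonempty := card_pos.1 (by rw [(h𝓕 T hT).2]; norm_num)
  obtain ⟨y, z, hTe, h⟩ :=
    exists_eq_triple_cross_pos (h𝓕 T hT).2 (by simpa using hint T hT T hT) hx
  have hx' := precedes_and_not_precedes hf h𝓕 hint hT hTe h
  have hy' := precedes_and_not_precedes hf h𝓕 hint hT (x := y) (y := z) (z := x)
    (by rw [hTe]; ext; simp only [mem_insert, mem_singleton]; tauto)
    (by simp only [cross_apply, Prod.fst_sub, Prod.snd_sub] at h ⊢; linear_combination h)
  have hz' := precedes_and_not_precedes hf h𝓕 hint hT (x := z) (y := x) (z := y)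
    (by rw [hTe]; ext; simp only [mem_insert, mem_singleton]; tauto)
    (by simp only [cross_apply, Prod.fst_sub, Prod.snd_sub] at h ⊢; linear_combination h)
  exact ⟨x, y, z, hTe, ⟨hx'.1, hy'.2⟩, ⟨hy'.1, hz'.2⟩, ⟨hz'.1, hx'.2⟩⟩

end Family

end IntersectingTriangles

theorem max_intersecting_family_convex_position_general (n : ℕ)
    (P : Finset (ℝ × ℝ)) (hP : P.card = n) (hconv : StrictConvexPos P)
    (𝓕 : Finset (Finset (ℝ × ℝ)))
    (h𝓕 : ∀ T ∈ 𝓕, T ⊆ P ∧ T.card = 3)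
    (hint : ∀ T₁ ∈ 𝓕, ∀ T₂ ∈ 𝓕,
      (interior (convexHull ℝ (T₁ : Set (ℝ × ℝ))) ∩
        interior (convexHull ℝ (T₂ : Set (ℝ × ℝ)))).Nonempty) :
    𝓕.card ≤ F n := by
  choose! f hf using fun x (hx : x ∈ P) =>
    IntersectingTriangles.exists_forall_lt_of_mem_extremePoints (hconv.2 x hx)
  subst hP
  exact IntersectingTriangles.card_le_F_of_forall_cycle (fun a b h h' => h.2 h'.1)
    (fun T hT => (h𝓕 T hT).1)
    fun T hT => IntersectingTriangles.exists_eq_triple_isArc hf h𝓕 hint hT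

theorem max_intersecting_family_convex_position (n : ℕ) (hn : 3 ≤ n)
    (P : Finset (ℝ × ℝ)) (hP : P.card = n) (hconv : StrictConvexPos P)
    (𝓕 : Finset (Finset (ℝ × ℝ)))
    (h𝓕 : ∀ T ∈ 𝓕, T ⊆ P ∧ T.card = 3)
    (hint : ∀ T₁ ∈ 𝓕, ∀ T₂ ∈ 𝓕,
      (interior (convexHull ℝ (T₁ : Set (ℝ × ℝ))) ∩
        interior (convexHull ℝ (T₂ : Set (ℝ × ℝ)))).Nonempty) :
    𝓕.card ≤ F n :=
  max_intersecting_family_convex_position_general n P hP hconv 𝓕 h𝓕 hint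
end

section
/- Let n ≥ 3 be odd and let V_n be the vertex set of the regular n-gon inscribed in the unit circle centered at the origin. Then every intersecting family of triangles spanned by V_n has size at most the number of 3-element subsets of V_n whose convex hull contains the origin in its interior. -/
/-!
Write `n = 2m + 1` and index the vertices by natural numbers modulo `n`. A triangle either
contains the centre in its interior or has its vertices at `u < j < k` with `k - u ≤ m`.
Such a short-arc triangle is sent to the central triangle `{u, k, j + m}`, whose gaps
`k - u`, `j + m - k`, `u + m + 1 - j` are all at most `m`. The image lies on the complementary
arc from `k` to `u + n`, so the chord `[u, k]` separates it from the original triangle. Two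
distinct short-arc triangles with the same image lie on the arcs cut off by two different sides
of it, so their interiors are disjoint as well. Hence the map fixing central triangles and
sending short-arc triangles to their partners is injective on every intersecting family.
-/

/-- The vertex set of the regular `n`-gon inscribed in the unit circle centered at the
origin: the points `(cos(2πk/n), sin(2πk/n))` for `k = 0, 1, ..., n-1`. -/
noncomputable def regularNgon (n : ℕ) : Finset (ℝ × ℝ) :=
  (Finset.range n).image
    (fun k : ℕ => (Real.cos (2 * Real.pi * k / n), Real.sin (2 * Real.pi * k / n)))

open Real Set Module

section Convex
variable {E : Type*} [NormedAddCommGroup E] [NormedSpace ℝ E] [FiniteDimensional ℝ E]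

theorem disjoint_interior_convexHull_of_separated (f : E →ₗ[ℝ] ℝ) (hf : f ≠ 0) {c : ℝ}
    {A B : Set E} (hA : ∀ x ∈ A, c ≤ f x) (hB : ∀ x ∈ B, f x ≤ c) :
    Disjoint (interior (convexHull ℝ A)) (interior (convexHull ℝ B)) := by
  have hopen := f.isOpenMap_of_finiteDimensional (LinearMap.surjective hf)
  have hcont := f.continuous_of_finiteDimensional
  have hA' : interior (convexHull ℝ A) ⊆ f ⁻¹' Ioi c := by
    rw [← interior_Ici, hopen.preimage_interior_eq_interior_preimage hcont]
    exact interior_mono (convexHull_min hA (convex_halfSpace_ge f.isLinear c))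
  have hB' : interior (convexHull ℝ B) ⊆ f ⁻¹' Iio c := by
    rw [← interior_Iic, hopen.preimage_interior_eq_interior_preimage hcont]
    exact interior_mono (convexHull_min hB (convex_halfSpace_le f.isLinear c))
  exact (Ioi_disjoint_Iio_same.preimage f).mono hA' hB'

theorem mem_interior_convexHull_of_pos_weights {ι : Type*} [Fintype ι] {p : ι → E}
    (hp : AffineIndependent ℝ p) (hcard : Fintype.card ι = finrank ℝ E + 1) {w : ι → ℝ}
    (hw : ∀ i, 0 < w i) {x : E} (hx : ∑ i, w i • p i = (∑ i, w i) • x) :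
    x ∈ interior (convexHull ℝ (range p)) := by
  let b : AffineBasis ι ℝ E := ⟨p, hp, hp.affineSpan_eq_top_iff_card_eq_finrank_add_one.2 hcard⟩
  have : Nonempty ι := Fintype.card_pos_iff.1 (by omega)
  set W := ∑ i, w i
  have hW : 0 < W := Finset.sum_pos (fun i _ => hw i) Finset.univ_nonempty
  have hw₁ : ∑ i, w i / W = 1 := by rw [← Finset.sum_div, div_self hW.ne']
  have hxb : x = Finset.univ.affineCombination ℝ b (fun i => w i / W) := by
    rw [Finset.affineCombination_eq_linear_combination _ _ _ hw₁]
    simp only [div_eq_inv_mul, mul_smul, ← Finset.smul_sum]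
    rw [show (⇑b : ι → E) = p from rfl, hx, smul_smul, inv_mul_cancel₀ hW.ne', one_smul]
  change x ∈ interior (convexHull ℝ (range b))
  rw [b.interior_convexHull, hxb]
  intro i
  rw [b.coord_apply_combination_of_mem (Finset.mem_univ i) hw₁]
  exact div_pos (hw i) hW
end Convex

theorem Finset.exists_lt_lt_of_card_eq_three {α : Type*} [LinearOrder α] {s : Finset α}
    (h : s.card = 3) : ∃ a b c, a < b ∧ b < c ∧ s = {a, b, c} := by
  let e := s.orderEmbOfFin h
  refine ⟨e 0, e 1, e 2, e.strictMono (by decide), e.strictMono (by decide), ?_⟩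
  rw [← Finset.coe_inj, ← Finset.range_orderEmbOfFin s h]
  ext x
  simp only [Set.mem_range, Fin.exists_fin_succ, Fin.exists_fin_zero, coe_insert, coe_singleton,
    Set.mem_insert_iff, Set.mem_singleton_iff]
  simp [e, eq_comm]

theorem affineIndependent_of_cross_ne_zero {a b c : ℝ × ℝ}
    (h : (b.1 - a.1) * (c.2 - a.2) - (b.2 - a.2) * (c.1 - a.1) ≠ 0) :
    AffineIndependent ℝ ![a, b, c] := by
  rw [affineIndependent_iff_not_collinear_set]
  intro hcol
  obtain ⟨v, hv⟩ := (collinear_iff_of_mem (by simp : a ∈ ({a, b, c} : Set (ℝ × ℝ)))).1 hcol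
  obtain ⟨r, rfl⟩ := hv b (by simp)
  obtain ⟨t, rfl⟩ := hv c (by simp)
  apply h
  simp only [vadd_eq_add, Prod.fst_add, Prod.snd_add, Prod.smul_fst, Prod.smul_snd, smul_eq_mul]
  ring

noncomputable def circlePoint (θ : ℝ) : ℝ × ℝ := (cos θ, sin θ)

theorem disjoint_interior_convexHull_of_arcs {α β : ℝ} (hαβ : α ≤ β) (hβα : β ≤ α + 2 * π)
    {A B : Set (ℝ × ℝ)} (hA : A ⊆ circlePoint '' Icc α β)
    (hB : B ⊆ circlePoint '' Icc β (α + 2 * π)) :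
    Disjoint (interior (convexHull ℝ A)) (interior (convexHull ℝ B)) := by
  set μ := (α + β) / 2 with hμ
  let f : ℝ × ℝ →ₗ[ℝ] ℝ := cos μ • LinearMap.fst ℝ ℝ ℝ + sin μ • LinearMap.snd ℝ ℝ ℝ
  have hf : ∀ θ, f (circlePoint θ) = cos (θ - μ) := fun θ => by
    simp only [f, circlePoint, cos_sub, LinearMap.add_apply, LinearMap.smul_apply,
      LinearMap.fst_apply, LinearMap.snd_apply, smul_eq_mul]
    ring
  have hf₀ : f ≠ 0 := fun h0 => by
    simpa [hf] using LinearMap.congr_fun h0 (circlePoint μ)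
  refine disjoint_interior_convexHull_of_separated f hf₀ (c := cos ((β - α) / 2)) ?_ ?_
  · rintro _ hx
    obtain ⟨θ, hθ, rfl⟩ := hA hx
    rw [hf, ← cos_abs (θ - μ)]
    exact cos_le_cos_of_nonneg_of_le_pi (abs_nonneg _) (by linarith)
      (abs_le.2 ⟨by linarith [hθ.1, hμ], by linarith [hθ.2, hμ]⟩)
  · rintro _ hx
    obtain ⟨θ, hθ, rfl⟩ := hB hx
    rw [hf]
    rcases le_total (θ - μ) π with hle | hle
    · exact cos_le_cos_of_nonneg_of_le_pi (by linarith) hle (by linarith [hθ.1, hμ])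
    · rw [← cos_two_pi_sub]
      exact cos_le_cos_of_nonneg_of_le_pi (by linarith) (by linarith [hμ])
        (by linarith [hθ.2, hμ])

theorem circlePoint_cross (a b : ℝ) :
    (circlePoint a).1 * (circlePoint b).2 - (circlePoint a).2 * (circlePoint b).1 =
      sin (b - a) := by
  simp only [circlePoint, sin_sub]
  ring

theorem zero_mem_interior_convexHull_of_gaps {α g₁ g₂ : ℝ} (h₁ : g₁ < π) (h₂ : g₂ < π)
    (h₁₂ : π < g₁ + g₂) :
    (0 : ℝ × ℝ) ∈ interior (convexHull ℝ
      {circlePoint α, circlePoint (α + g₁), circlePoint (α + g₁ + g₂)}) := by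
  have hs₁ : 0 < sin g₁ := sin_pos_of_pos_of_lt_pi (by linarith) h₁
  have hs₂ : 0 < sin g₂ := sin_pos_of_pos_of_lt_pi (by linarith) h₂
  have hs₃ : 0 < -sin (g₁ + g₂) := by
    rw [← sin_sub_pi]
    exact sin_pos_of_pos_of_lt_pi (by linarith) (by linarith)
  set a := circlePoint α
  set b := circlePoint (α + g₁)
  set c := circlePoint (α + g₁ + g₂)
  have hcross : (b.1 - a.1) * (c.2 - a.2) - (b.2 - a.2) * (c.1 - a.1)
      = sin g₂ + -sin (g₁ + g₂) + sin g₁ := by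
    have hab := circlePoint_cross α (α + g₁)
    have hbc := circlePoint_cross (α + g₁) (α + g₁ + g₂)
    have hca := circlePoint_cross (α + g₁ + g₂) α
    rw [add_sub_cancel_left] at hab
    rw [add_sub_cancel_left] at hbc
    rw [show α - (α + g₁ + g₂) = -(g₁ + g₂) by ring, sin_neg] at hca
    linear_combination hab + hbc + hca
  have hsum : sin g₂ • a + -sin (g₁ + g₂) • b + sin g₁ • c = 0 := by
    ext
    · simp only [a, b, c, circlePoint, cos_add, sin_add, Prod.fst_add, Prod.smul_fst, smul_eq_mul,
        Prod.fst_zero]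
      linear_combination (-(sin g₂ * cos α)) * sin_sq_add_cos_sq g₁
    · simp only [a, b, c, circlePoint, cos_add, sin_add, Prod.snd_add, Prod.smul_snd, smul_eq_mul,
        Prod.snd_zero]
      linear_combination (-(sin g₂ * sin α)) * sin_sq_add_cos_sq g₁
  have := mem_interior_convexHull_of_pos_weights (p := ![a, b, c])
    (affineIndependent_of_cross_ne_zero (by rw [hcross]; positivity)) (by simp)
    (w := ![sin g₂, -sin (g₁ + g₂), sin g₁]) (fun i => by fin_cases i <;> simp <;> linarith)
    (x := 0) (by simpa [Fin.sum_univ_three] using hsum)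
  rwa [Matrix.range_cons, Matrix.range_cons, Matrix.range_cons, Matrix.range_empty,
    union_empty, singleton_union, singleton_union] at this

noncomputable def vertex (n k : ℕ) : ℝ × ℝ := circlePoint (2 * π * k / n)

theorem regularNgon_eq_image (n : ℕ) : regularNgon n = (Finset.range n).image (vertex n) := rfl

theorem vertex_add_mul (n k q : ℕ) : vertex n (k + n * q) = vertex n k := by
  rcases Nat.eq_zero_or_pos n with rfl | hn
  · simp
  have : 2 * π * ((k + n * q : ℕ) : ℝ) / n = 2 * π * k / n + q * (2 * π) := by
    push_cast
    field_simp
  simp only [vertex, circlePoint, this, cos_add_nat_mul_two_pi, sin_add_nat_mul_two_pi]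

theorem vertex_add_self (n k : ℕ) : vertex n (k + n) = vertex n k := by
  simpa using vertex_add_mul n k 1

theorem vertex_mem_regularNgon {n : ℕ} (hn : 0 < n) (k : ℕ) : vertex n k ∈ regularNgon n := by
  rw [← Nat.mod_add_div k n, vertex_add_mul]
  exact Finset.mem_image_of_mem _ (Finset.mem_range.2 (Nat.mod_lt k hn))

theorem eq_or_eq_add_or_eq_add_of_vertex_eq {n x y : ℕ} (hn : 0 < n) (h : vertex n x = vertex n y)
    (hxy : x < y + 2 * n) (hyx : y < x + 2 * n) : x = y ∨ x = y + n ∨ y = x + n := by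
  obtain ⟨k, hk⟩ := Real.Angle.angle_eq_iff_two_pi_dvd_sub.1
    (Real.Angle.cos_sin_inj (congrArg Prod.fst h) (congrArg Prod.snd h))
  have hk' : (x : ℤ) - y = n * k := by
    have hn' : (n : ℝ) ≠ 0 := by positivity
    have : (x : ℝ) - y = n * k := by
      field_simp at hk
      nlinarith [pi_pos]
    exact_mod_cast this
  have hk₁ : -2 < k := by nlinarith
  have hk₂ : k < 2 := by nlinarith
  interval_cases k <;> omega

theorem vertex_injOn {n : ℕ} : InjOn (vertex n) (Finset.range n : Set ℕ) := by
  intro x hx y hy h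
  simp only [Finset.coe_range, mem_Iio] at hx hy
  have := eq_or_eq_add_or_eq_add_of_vertex_eq (by omega) h (by omega) (by omega)
  omega

theorem disjoint_interior_convexHull_of_vertex_arcs {n a b : ℕ} (hn : 0 < n) (hab : a ≤ b)
    (hb : b ≤ a + n) {A B : Set (ℝ × ℝ)} (hA : A ⊆ vertex n '' Icc a b)
    (hB : B ⊆ vertex n '' Icc b (a + n)) :
    Disjoint (interior (convexHull ℝ A)) (interior (convexHull ℝ B)) := by
  have hn' : (0 : ℝ) < n := by exact_mod_cast hn
  have arc : ∀ x y : ℕ,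
      vertex n '' Icc x y ⊆ circlePoint '' Icc (2 * π * x / n) (2 * π * y / n) := by
    rintro x y _ ⟨z, hz, rfl⟩
    exact ⟨_, ⟨by gcongr; exact_mod_cast hz.1, by gcongr; exact_mod_cast hz.2⟩, rfl⟩
  have hwrap : 2 * π * ((a + n : ℕ) : ℝ) / n = 2 * π * a / n + 2 * π := by
    push_cast
    field_simp
  refine disjoint_interior_convexHull_of_arcs (by gcongr) ?_ (hA.trans (arc _ _))
    (hwrap ▸ hB.trans (arc _ _))
  rw [← hwrap]
  gcongr

def centralTriangles (n : ℕ) : Set (Finset (ℝ × ℝ)) :=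
  {T | T ⊆ regularNgon n ∧ T.card = 3 ∧
    (0 : ℝ × ℝ) ∈ interior (convexHull ℝ (T : Set (ℝ × ℝ)))}

theorem centralTriangles_finite (n : ℕ) : (centralTriangles n).Finite :=
  (regularNgon n).powerset.finite_toSet.subset fun _ hT => by simpa using hT.1

theorem vertex_triangle_mem_centralTriangles {n a p q : ℕ} (hp : 2 * p < n) (hq : 2 * q < n)
    (hpq : n < 2 * (p + q)) :
    {vertex n a, vertex n (a + p), vertex n (a + p + q)} ∈ centralTriangles n := by
  have hn : 0 < n := by omega
  have hn' : (0 : ℝ) < n := by exact_mod_cast hn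
  have hne : ∀ {x y : ℕ}, x < y → y < x + n → vertex n x ≠ vertex n y := fun hxy hyx h => by
    have := eq_or_eq_add_or_eq_add_of_vertex_eq hn h (by omega) (by omega)
    omega
  have angle_lt : ∀ {x : ℕ}, 2 * x < n → 2 * π * x / n < π := fun {x} h => by
    rw [div_lt_iff₀ hn']
    have : (2 * x : ℝ) < n := by exact_mod_cast h
    nlinarith [pi_pos]
  refine ⟨?_, Finset.card_eq_three.2 ⟨_, _, _, hne (by omega) (by omega),
    hne (by omega) (by omega), hne (by omega) (by omega), rfl⟩, ?_⟩
  · simp only [Finset.insert_subset_iff, Finset.singleton_subset_iff]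
    exact ⟨vertex_mem_regularNgon hn _, vertex_mem_regularNgon hn _, vertex_mem_regularNgon hn _⟩
  · have h₁₂ : π < 2 * π * p / n + 2 * π * q / n := by
      rw [← add_div, lt_div_iff₀ hn']
      have : (n : ℝ) < 2 * (p + q) := by exact_mod_cast hpq
      nlinarith [pi_pos]
    simpa [vertex, mul_add, add_div] using
      zero_mem_interior_convexHull_of_gaps (α := 2 * π * a / n) (angle_lt hp) (angle_lt hq) h₁₂

def IsShortArc (n : ℕ) (T : Finset (ℝ × ℝ)) (u j k : ℕ) : Prop :=
  u < j ∧ j < k ∧ 2 * k < n + 2 * u ∧ u < n ∧ T = {vertex n u, vertex n j, vertex n k}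

noncomputable def centralPartner (n u j k : ℕ) : Finset (ℝ × ℝ) :=
  {vertex n u, vertex n k, vertex n (j + n / 2)}

namespace IsShortArc

variable {n u j k : ℕ} {T : Finset (ℝ × ℝ)}

theorem subset_arc (h : IsShortArc n T u j k) (t : ℕ) :
    (T : Set (ℝ × ℝ)) ⊆ vertex n '' Icc (u + n * t) (k + n * t) := by
  obtain ⟨huj, hjk, -, -, rfl⟩ := h
  intro x hx
  simp only [Finset.coe_insert, Finset.coe_singleton, mem_insert_iff, mem_singleton_iff] at hx
  rcases hx with rfl | rfl | rfl
  · exact ⟨u + n * t, ⟨le_rfl, by omega⟩, vertex_add_mul n u t⟩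
  · exact ⟨j + n * t, ⟨by omega, by omega⟩, vertex_add_mul n j t⟩
  · exact ⟨k + n * t, ⟨by omega, le_rfl⟩, vertex_add_mul n k t⟩

theorem centralPartner_subset_arc (h : IsShortArc n T u j k) :
    (centralPartner n u j k : Set (ℝ × ℝ)) ⊆ vertex n '' Icc k (u + n) := by
  obtain ⟨huj, hjk, hk, -, -⟩ := h
  intro x hx
  simp only [centralPartner, Finset.coe_insert, Finset.coe_singleton, mem_insert_iff,
    mem_singleton_iff] at hx
  rcases hx with rfl | rfl | rfl
  · exact ⟨u + n, ⟨by omega, le_rfl⟩, vertex_add_self n u⟩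
  · exact ⟨k, ⟨le_rfl, by omega⟩, rfl⟩
  · exact ⟨j + n / 2, ⟨by omega, by omega⟩, rfl⟩

theorem disjoint_centralPartner (h : IsShortArc n T u j k) :
    Disjoint (interior (convexHull ℝ (T : Set (ℝ × ℝ))))
      (interior (convexHull ℝ (centralPartner n u j k : Set (ℝ × ℝ)))) := by
  have ⟨huj, hjk, hk, hu, _⟩ := h
  exact disjoint_interior_convexHull_of_vertex_arcs (by omega) (by omega) (by omega)
    (by simpa using h.subset_arc 0) h.centralPartner_subset_arc

theorem centralPartner_mem_centralTriangles (h : IsShortArc n T u j k) :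
    centralPartner n u j k ∈ centralTriangles n := by
  obtain ⟨huj, hjk, hk, -, -⟩ := h
  have := vertex_triangle_mem_centralTriangles (n := n) (a := u) (p := k - u)
    (q := j + n / 2 - k) (by omega) (by omega) (by omega)
  rwa [show u + (k - u) = k by omega, show k + (j + n / 2 - k) = j + n / 2 by omega] at this

end IsShortArc

theorem mem_centralTriangles_or_isShortArc_of_lt {n a b c : ℕ} (hn : Odd n) (hab : a < b)
    (hbc : b < c) (hc : c < n) :
    {vertex n a, vertex n b, vertex n c} ∈ centralTriangles n ∨
      ∃ u j k, IsShortArc n {vertex n a, vertex n b, vertex n c} u j k := by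
  have := Nat.odd_iff.1 hn
  rcases (by omega : 2 * c < n + 2 * a ∨ n + 2 * a < 2 * b ∨ n + 2 * b < 2 * c ∨
      (2 * (b - a) < n ∧ 2 * (c - b) < n ∧ n < 2 * (b - a + (c - b)))) with h | h | h | h
  · exact .inr ⟨a, b, c, hab, hbc, h, by omega, rfl⟩
  · refine .inr ⟨b, c, a + n, hbc, by omega, by omega, by omega, ?_⟩
    rw [vertex_add_self, Finset.insert_comm, Finset.pair_comm]
  · refine .inr ⟨c, a + n, b + n, by omega, by omega, by omega, hc, ?_⟩
    rw [vertex_add_self, vertex_add_self, Finset.pair_comm, Finset.insert_comm]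
  · left
    have := vertex_triangle_mem_centralTriangles (a := a) h.1 h.2.1 h.2.2
    rwa [show a + (b - a) = b by omega, show b + (c - b) = c by omega] at this

theorem mem_centralTriangles_or_isShortArc {n : ℕ} (hn : Odd n) {T : Finset (ℝ × ℝ)}
    (hT : T ⊆ regularNgon n) (hT₃ : T.card = 3) :
    T ∈ centralTriangles n ∨ ∃ u j k, IsShortArc n T u j k := by
  rw [regularNgon_eq_image] at hT
  obtain ⟨K, hK, rfl⟩ := Finset.subset_image_iff.1 hT
  rw [Finset.card_image_of_injOn (vertex_injOn.mono hK)] at hT₃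
  obtain ⟨a, b, c, hab, hbc, rfl⟩ := Finset.exists_lt_lt_of_card_eq_three hT₃
  have hc : c < n := Finset.mem_range.1 (hK (by simp))
  simpa only [Finset.image_insert, Finset.image_singleton] using
    mem_centralTriangles_or_isShortArc_of_lt hn hab hbc hc

theorem IsShortArc.eq_or_disjoint_of_centralPartner_eq {n u j k u' j' k' : ℕ}
    {T T' : Finset (ℝ × ℝ)} (h : IsShortArc n T u j k) (h' : IsShortArc n T' u' j' k')
    (hC : centralPartner n u j k = centralPartner n u' j' k') :
    T = T' ∨ Disjoint (interior (convexHull ℝ (T : Set (ℝ × ℝ))))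
      (interior (convexHull ℝ (T' : Set (ℝ × ℝ)))) := by
  have ⟨huj, hjk, hk, hu, hT⟩ := h
  have ⟨huj', hjk', hk', hu', hT'⟩ := h'
  have hn : 0 < n := by omega
  have index : ∀ x, vertex n x ∈ centralPartner n u' j' k' → x < 2 * n →
      (x = u ∨ x = u + n ∨ u = x + n) ∨ (x = k ∨ x = k + n ∨ k = x + n) ∨
        (x = j + n / 2 ∨ x = j + n / 2 + n ∨ j + n / 2 = x + n) := by
    intro x hx hx₂
    rw [← hC] at hx
    simp only [centralPartner, Finset.mem_insert, Finset.mem_singleton] at hx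
    rcases hx with hx | hx | hx
    · exact .inl (eq_or_eq_add_or_eq_add_of_vertex_eq hn hx (by omega) (by omega))
    · exact .inr (.inl (eq_or_eq_add_or_eq_add_of_vertex_eq hn hx (by omega) (by omega)))
    · exact .inr (.inr (eq_or_eq_add_or_eq_add_of_vertex_eq hn hx (by omega) (by omega)))
  have h₁ := index u' (by simp [centralPartner]) (by omega)
  have h₂ := index k' (by simp [centralPartner]) (by omega)
  have h₃ := index (j' + n / 2) (by simp [centralPartner]) (by omega)
  -- Either `[u', k']` is the side `[u, k]` of the common partner, or, up to a shift by `n`,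
  -- another side of it, which lies on the arc from `k` to `u + n`.
  have : (u' = u ∧ j' = j ∧ k' = k) ∨ (k ≤ u' ∧ k' ≤ u + n) ∨
      (k ≤ u' + n ∧ k' + n ≤ u + n) := by
    omega
  rcases this with ⟨rfl, rfl, rfl⟩ | hsep
  · exact .inl (hT.trans hT'.symm)
  obtain ⟨t, ht⟩ : ∃ t, k ≤ u' + n * t ∧ k' + n * t ≤ u + n := by
    rcases hsep with hsep | hsep
    exacts [⟨0, by simpa using hsep⟩, ⟨1, by simpa using hsep⟩]
  exact .inr (disjoint_interior_convexHull_of_vertex_arcs hn (by omega) (by omega)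
    (by simpa using h.subset_arc 0)
    ((h'.subset_arc t).trans (image_mono (Icc_subset_Icc ht.1 ht.2))))

open Classical in
noncomputable def toCentral (n : ℕ) (T : Finset (ℝ × ℝ)) : Finset (ℝ × ℝ) :=
  if h : ∃ t : ℕ × ℕ × ℕ, IsShortArc n T t.1 t.2.1 t.2.2 then
    centralPartner n h.choose.1 h.choose.2.1 h.choose.2.2
  else T

theorem toCentral_cases (n : ℕ) (T : Finset (ℝ × ℝ)) :
    (∃ u j k, IsShortArc n T u j k ∧ toCentral n T = centralPartner n u j k) ∨
      ((∀ u j k, ¬IsShortArc n T u j k) ∧ toCentral n T = T) := by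
  unfold toCentral
  split_ifs with h
  · exact .inl ⟨_, _, _, h.choose_spec, rfl⟩
  · exact .inr ⟨fun u j k hT => h ⟨(u, j, k), hT⟩, rfl⟩

theorem toCentral_mem_centralTriangles {n : ℕ} (hn : Odd n) {T : Finset (ℝ × ℝ)}
    (hT : T ⊆ regularNgon n) (hT₃ : T.card = 3) : toCentral n T ∈ centralTriangles n := by
  rcases toCentral_cases n T with ⟨u, j, k, h, he⟩ | ⟨h, he⟩
  · exact he ▸ h.centralPartner_mem_centralTriangles
  · rw [he]
    exact (mem_centralTriangles_or_isShortArc hn hT hT₃).resolve_right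
      fun ⟨u, j, k, h'⟩ => h u j k h'

theorem eq_of_toCentral_eq {n : ℕ} {T T' : Finset (ℝ × ℝ)}
    (hmeet : ¬Disjoint (interior (convexHull ℝ (T : Set (ℝ × ℝ))))
      (interior (convexHull ℝ (T' : Set (ℝ × ℝ)))))
    (h : toCentral n T = toCentral n T') : T = T' := by
  rcases toCentral_cases n T with ⟨u, j, k, hT, he⟩ | ⟨-, he⟩ <;>
    rcases toCentral_cases n T' with ⟨u', j', k', hT', he'⟩ | ⟨-, he'⟩ <;>
    rw [he, he'] at h
  · exact (hT.eq_or_disjoint_of_centralPartner_eq hT' h).resolve_right hmeet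
  · exact absurd (h ▸ hT.disjoint_centralPartner) hmeet
  · exact absurd (h ▸ hT'.disjoint_centralPartner).symm hmeet
  · exact h

theorem max_intersecting_family_regular_ngon_general (n : ℕ) (hodd : Odd n)
    (𝓕 : Finset (Finset (ℝ × ℝ)))
    (h𝓕 : ∀ T ∈ 𝓕, T ⊆ regularNgon n ∧ T.card = 3)
    (hint : ∀ T₁ ∈ 𝓕, ∀ T₂ ∈ 𝓕,
      (interior (convexHull ℝ (T₁ : Set (ℝ × ℝ))) ∩
        interior (convexHull ℝ (T₂ : Set (ℝ × ℝ)))).Nonempty) :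
    𝓕.card ≤
      Set.ncard {T : Finset (ℝ × ℝ) | T ⊆ regularNgon n ∧ T.card = 3 ∧
        ((0, 0) : ℝ × ℝ) ∈ interior (convexHull ℝ (T : Set (ℝ × ℝ)))} := by
  rw [← Set.ncard_coe_finset]
  exact Set.ncard_le_ncard_of_injOn (toCentral n)
    (fun T hT => toCentral_mem_centralTriangles hodd (h𝓕 T hT).1 (h𝓕 T hT).2)
    (fun T hT T' hT' => eq_of_toCentral_eq (not_disjoint_iff_nonempty_inter.2 (hint T hT T' hT')))
    (centralTriangles_finite n)

theorem max_intersecting_family_regular_ngon (n : ℕ) (hn : 3 ≤ n) (hodd : Odd n)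
    (𝓕 : Finset (Finset (ℝ × ℝ)))
    (h𝓕 : ∀ T ∈ 𝓕, T ⊆ regularNgon n ∧ T.card = 3)
    (hint : ∀ T₁ ∈ 𝓕, ∀ T₂ ∈ 𝓕,
      (interior (convexHull ℝ (T₁ : Set (ℝ × ℝ))) ∩
        interior (convexHull ℝ (T₂ : Set (ℝ × ℝ)))).Nonempty) :
    𝓕.card ≤
      Set.ncard {T : Finset (ℝ × ℝ) | T ⊆ regularNgon n ∧ T.card = 3 ∧
        ((0, 0) : ℝ × ℝ) ∈ interior (convexHull ℝ (T : Set (ℝ × ℝ)))} :=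
  max_intersecting_family_regular_ngon_general n hodd 𝓕 h𝓕 hint
end

section
/- Let P be a set of n ≥ 3 points in the plane in strictly convex position, let p, q ∈ P be distinct, let a be the number of points of P lying strictly on one side of the line through p and q and b the number lying strictly on the other side (so a + b = n − 2). If 𝓕 is an intersecting family of triangles spanned by P such that every triangle in 𝓕 contains both p and q among its vertices, then |𝓕| ≤ max(a, b). -/
/-- The determinant of the 2×2 matrix with columns `u` and `v` in the plane. -/
def detp (u v : ℝ × ℝ) : ℝ := u.1 * v.2 - u.2 * v.1

lemma smul_of_det_eq_zero {u v : ℝ × ℝ} (hu : u ≠ 0) (h : detp u v = 0) :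
    ((u.1 * v.1 + u.2 * v.2) / (u.1 ^ 2 + u.2 ^ 2)) • u = v := by
  have hD : u.1 ^ 2 + u.2 ^ 2 ≠ 0 := by
    intro hD
    apply hu
    have h1 : u.1 = 0 := by nlinarith [sq_nonneg u.1, sq_nonneg u.2]
    have h2 : u.2 = 0 := by nlinarith [sq_nonneg u.1, sq_nonneg u.2]
    exact Prod.ext h1 h2
  have hdet : u.1 * v.2 = u.2 * v.1 := by simp [detp] at h; linarith
  apply Prod.ext
  · simp only [Prod.smul_fst, smul_eq_mul]; field_simp; linear_combination u.2 * hdet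
  · simp only [Prod.smul_snd, smul_eq_mul]; field_simp; linear_combination (-u.1) * hdet

lemma collinear_of_det (p q z : ℝ × ℝ) (hqp : q ≠ p) (h : detp (q - p) (z - p) = 0) :
    Collinear ℝ ({p, q, z} : Set (ℝ × ℝ)) := by
  rw [collinear_iff_exists_forall_eq_smul_vadd]
  have hu : q - p ≠ 0 := sub_ne_zero.mpr hqp
  refine ⟨p, q - p, ?_⟩
  rintro x (rfl | rfl | rfl)
  · exact ⟨0, by simp⟩
  · exact ⟨1, by simp⟩
  · refine ⟨((q-p).1 * (x-p).1 + (q-p).2 * (x-p).2) / ((q-p).1 ^ 2 + (q-p).2 ^ 2), ?_⟩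
    rw [smul_of_det_eq_zero hu h]
    simp

lemma detp_sub_base (u p w : ℝ × ℝ) : detp u (w - p) = detp u w - detp u p := by
  simp [detp]; ring

lemma hull_subset_halfspace (u p : ℝ × ℝ) (s : Set (ℝ × ℝ))
    (hs : ∀ x ∈ s, 0 ≤ detp u (x - p)) :
    convexHull ℝ s ⊆ {w | 0 ≤ detp u (w - p)} := by
  apply convexHull_min hs
  show Convex ℝ {w : ℝ × ℝ | 0 ≤ detp u (w - p)}
  have : {w : ℝ × ℝ | 0 ≤ detp u (w - p)} = {w : ℝ × ℝ | detp u p ≤ detp u w} := by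
    ext w; simp [detp_sub_base]
  rw [this]
  exact convex_halfSpace_ge ⟨fun x y => by simp [detp]; ring, fun c x => by simp [detp]; ring⟩ _

lemma detp_interior_halfspace (u p : ℝ × ℝ) (hu : u ≠ 0) :
    interior {w : ℝ × ℝ | 0 ≤ detp u (w - p)} ⊆ {w | 0 < detp u (w - p)} := by
  intro w hw
  have hmem : 0 ≤ detp u (w - p) :=
    interior_subset (s := {w : ℝ × ℝ | 0 ≤ detp u (w - p)}) hw
  rcases lt_or_eq_of_le hmem with h | h
  · exact h
  exfalso
  rw [mem_interior_iff_mem_nhds, Metric.mem_nhds_iff] at hw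
  obtain ⟨ε, hε, hball⟩ := hw
  set v : ℝ × ℝ := (u.2, -u.1) with hv
  have hD : 0 < u.1 ^ 2 + u.2 ^ 2 := by
    by_contra hc
    push_neg at hc
    have h1 : u.1 = 0 := by nlinarith [sq_nonneg u.1, sq_nonneg u.2]
    have h2 : u.2 = 0 := by nlinarith [sq_nonneg u.1, sq_nonneg u.2]
    exact hu (Prod.ext h1 h2)
  have hvn : (0:ℝ) < ‖v‖ := by
    rw [norm_pos_iff]
    intro h0
    rw [Prod.ext_iff] at h0
    simp only [hv] at h0
    exact hu (Prod.ext (by simpa using h0.2) (by simpa using h0.1))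
  set t : ℝ := ε / (2 * ‖v‖) with ht
  have htpos : 0 < t := by positivity
  have hdist : dist (w + t • v) w < ε := by
    rw [dist_eq_norm]
    have : w + t • v - w = t • v := by abel
    rw [this, norm_smul, Real.norm_eq_abs, abs_of_pos htpos, ht]
    have he : ε / (2 * ‖v‖) * ‖v‖ = ε / 2 := by field_simp
    rw [he]; linarith
  have hmem2 : 0 ≤ detp u (w + t • v - p) := hball (Metric.mem_ball.mpr hdist)
  have hval : detp u (w + t • v - p) = detp u (w - p) + t * detp u v := by
    simp [detp]; ring
  have hvd : detp u v = -(u.1 ^ 2 + u.2 ^ 2) := by simp [detp, hv]; ring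
  rw [hval, ← h, hvd] at hmem2
  nlinarith

lemma interior_hull_subset (u p q' z : ℝ × ℝ) (hu : u ≠ 0)
    (hq : detp u (q' - p) = 0) (hz : 0 < detp u (z - p)) :
    interior (convexHull ℝ ({p, q', z} : Set (ℝ × ℝ))) ⊆ {w | 0 < detp u (w - p)} := by
  refine subset_trans (interior_mono (hull_subset_halfspace u p _ ?_))
    (detp_interior_halfspace u p hu)
  rintro x (rfl | rfl | rfl)
  · simp [detp]
  · exact le_of_eq hq.symm
  · exact le_of_lt hz

lemma finset_card_le_filter_image (P : Finset (ℝ × ℝ)) (p q : ℝ × ℝ)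
    (𝓕 : Finset (Finset (ℝ × ℝ))) (pr : ℝ × ℝ → Prop) [DecidablePred pr]
    (h : ∀ T ∈ 𝓕, ∃ z, pr z ∧ z ∈ P ∧ T = {p, q, z}) :
    𝓕.card ≤ (P.filter pr).card := by
  have hsub : 𝓕 ⊆ (P.filter pr).image (fun z => ({p, q, z} : Finset (ℝ × ℝ))) := by
    intro T hT
    obtain ⟨z, hz1, hz2, hz3⟩ := h T hT
    exact Finset.mem_image.mpr ⟨z, Finset.mem_filter.mpr ⟨hz2, hz1⟩, hz3.symm⟩
  exact le_trans (Finset.card_le_card hsub) Finset.card_image_le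

theorem intersecting_family_through_two_points (n : ℕ) (hn : 3 ≤ n)
    (P : Finset (ℝ × ℝ)) (hPcard : P.card = n) (hconv : StrictConvexPos P)
    (p q : ℝ × ℝ) (hp : p ∈ P) (hq : q ∈ P) (hpq : p ≠ q)
    (a b : ℕ)
    (ha : a = Set.ncard {z : ℝ × ℝ | z ∈ P ∧ 0 < detp (q - p) (z - p)})
    (hb : b = Set.ncard {z : ℝ × ℝ | z ∈ P ∧ detp (q - p) (z - p) < 0})
    (𝓕 : Finset (Finset (ℝ × ℝ)))
    (h𝓕 : ∀ T ∈ 𝓕, T ⊆ P ∧ T.card = 3 ∧ p ∈ T ∧ q ∈ T)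
    (hint : ∀ T₁ ∈ 𝓕, ∀ T₂ ∈ 𝓕,
      (interior (convexHull ℝ (T₁ : Set (ℝ × ℝ))) ∩
        interior (convexHull ℝ (T₂ : Set (ℝ × ℝ)))).Nonempty) :
    𝓕.card ≤ max a b := by
  classical
  have hu : q - p ≠ 0 := sub_ne_zero.mpr (Ne.symm hpq)
  have hu' : p - q ≠ 0 := sub_ne_zero.mpr hpq
  have hnegdet : ∀ x : ℝ × ℝ, detp (p - q) x = - detp (q - p) x := by
    intro x; simp [detp]; ring
  -- extraction of the third vertex
  have third : ∀ T ∈ 𝓕, ∃ z ∈ P, z ≠ p ∧ z ≠ q ∧ T = {p, q, z} := by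
    intro T hT
    obtain ⟨hTP, hT3, hpT, hqT⟩ := h𝓕 T hT
    have hq' : q ∈ T.erase p := Finset.mem_erase.mpr ⟨Ne.symm hpq, hqT⟩
    have hc2 : ((T.erase p).erase q).card = 1 := by
      rw [Finset.card_erase_of_mem hq', Finset.card_erase_of_mem hpT, hT3]
    obtain ⟨z, hz⟩ := Finset.card_eq_one.mp hc2
    have hzT : z ∈ (T.erase p).erase q := hz ▸ Finset.mem_singleton_self z
    rw [Finset.mem_erase, Finset.mem_erase] at hzT
    obtain ⟨hzq, hzp, hzT'⟩ := hzT
    refine ⟨z, hTP hzT', hzp, hzq, ?_⟩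
    have hsub : ({p, q, z} : Finset (ℝ × ℝ)) ⊆ T := by
      intro x hx
      simp only [Finset.mem_insert, Finset.mem_singleton] at hx
      rcases hx with rfl | rfl | rfl
      · exact hpT
      · exact hqT
      · exact hzT'
    have hcard : ({p, q, z} : Finset (ℝ × ℝ)).card = 3 := by
      rw [Finset.card_insert_of_notMem (by simp [hpq, Ne.symm hzp]),
        Finset.card_insert_of_notMem (by simp [Ne.symm hzq])]
      simp
    exact (Finset.eq_of_subset_of_card_le hsub (by rw [hT3, hcard])).symm
  -- determinants of third points are nonzero
  have hdet : ∀ z ∈ P, z ≠ p → z ≠ q → detp (q - p) (z - p) ≠ 0 := by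
    intro z hz hzp hzq h
    exact hconv.1 p hp q hq z hz hpq (Ne.symm hzp) (Ne.symm hzq)
      (collinear_of_det p q z (Ne.symm hpq) h)
  -- opposite signs are impossible
  have opp : ∀ T₁ ∈ 𝓕, ∀ T₂ ∈ 𝓕, ∀ z₁ z₂ : ℝ × ℝ, T₁ = {p, q, z₁} → T₂ = {p, q, z₂} →
      0 < detp (q - p) (z₁ - p) → detp (q - p) (z₂ - p) < 0 → False := by
    intro T₁ hT₁ T₂ hT₂ z₁ z₂ he₁ he₂ hpos hneg
    have h1 : interior (convexHull ℝ (T₁ : Set (ℝ × ℝ))) ⊆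
        {w | 0 < detp (q - p) (w - p)} := by
      rw [he₁]
      have hcoe : (({p, q, z₁} : Finset (ℝ × ℝ)) : Set (ℝ × ℝ)) = {p, q, z₁} := by simp
      rw [hcoe]
      exact interior_hull_subset (q - p) p q z₁ hu (by simp [detp]; ring) hpos
    have h2 : interior (convexHull ℝ (T₂ : Set (ℝ × ℝ))) ⊆
        {w | 0 < detp (p - q) (w - p)} := by
      rw [he₂]
      have hcoe : (({p, q, z₂} : Finset (ℝ × ℝ)) : Set (ℝ × ℝ)) = {p, q, z₂} := by simp
      rw [hcoe]
      refine interior_hull_subset (p - q) p q z₂ hu' ?_ ?_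
      · simp [detp]; ring
      · rw [hnegdet]; linarith
    obtain ⟨w, hw1, hw2⟩ := hint T₁ hT₁ T₂ hT₂
    have g1 : 0 < detp (q - p) (w - p) := h1 hw1
    have g2 : 0 < detp (p - q) (w - p) := h2 hw2
    rw [hnegdet] at g2
    linarith
  -- counting
  have hacard : a = (P.filter (fun z => 0 < detp (q - p) (z - p))).card := by
    rw [ha]
    have : {z : ℝ × ℝ | z ∈ P ∧ 0 < detp (q - p) (z - p)} =
        ↑(P.filter (fun z => 0 < detp (q - p) (z - p))) := by
      ext z; simp [Finset.mem_filter]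
    rw [this, Set.ncard_coe_finset]
  have hbcard : b = (P.filter (fun z => detp (q - p) (z - p) < 0)).card := by
    rw [hb]
    have : {z : ℝ × ℝ | z ∈ P ∧ detp (q - p) (z - p) < 0} =
        ↑(P.filter (fun z => detp (q - p) (z - p) < 0)) := by
      ext z; simp [Finset.mem_filter]
    rw [this, Set.ncard_coe_finset]
  rcases Finset.eq_empty_or_nonempty 𝓕 with h0 | ⟨T₀, hT₀⟩
  · simp [h0]
  obtain ⟨z₀, hz₀P, hz₀p, hz₀q, hT₀eq⟩ := third T₀ hT₀
  rcases (hdet z₀ hz₀P hz₀p hz₀q).lt_or_gt with hneg | hpos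
  · -- all thirds negative: bound by b
    refine le_trans ?_ (le_max_right a b)
    rw [hbcard]
    apply finset_card_le_filter_image P p q 𝓕 (fun z => detp (q - p) (z - p) < 0)
    intro T hT
    obtain ⟨z, hzP, hzp, hzq, hTeq⟩ := third T hT
    refine ⟨z, ?_, hzP, hTeq⟩
    by_contra hc
    push_neg at hc
    have hzpos : 0 < detp (q - p) (z - p) :=
      lt_of_le_of_ne hc (Ne.symm (hdet z hzP hzp hzq))
    exact opp T hT T₀ hT₀ z z₀ hTeq hT₀eq hzpos hneg
  · -- all thirds positive: bound by a
    refine le_trans ?_ (le_max_left a b)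
    rw [hacard]
    apply finset_card_le_filter_image P p q 𝓕 (fun z => 0 < detp (q - p) (z - p))
    intro T hT
    obtain ⟨z, hzP, hzp, hzq, hTeq⟩ := third T hT
    refine ⟨z, ?_, hzP, hTeq⟩
    by_contra hc
    push_neg at hc
    have hzneg : detp (q - p) (z - p) < 0 := lt_of_le_of_ne hc (hdet z hzP hzp hzq)
    exact opp T₀ hT₀ T hT z₀ z hT₀eq hTeq hpos hzneg
end

section
/- Let P be a set of n ≥ 3 points in the plane in strictly convex position, let p, q ∈ P be distinct, let a be the number of points of P lying strictly on one side of the line through p and q and b the number lying strictly on the other side. If 𝓕 is an intersecting family of triangles spanned by P such that every triangle in 𝓕 contains exactly one of the points p, q among its vertices and its two other vertices lie strictly on opposite sides of the line through p and q, then |𝓕| ≤ a·b. -/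
lemma detp_comm (u v : ℝ × ℝ) : detp u v = -detp v u := by simp [detp]; ring
lemma detp_self (u : ℝ × ℝ) : detp u u = 0 := by simp [detp]; ring
lemma detp_smul_right (u v : ℝ × ℝ) (t : ℝ) : detp u (t • v) = t * detp u v := by
  simp [detp, Prod.smul_fst, Prod.smul_snd]; ring
lemma detp_add_right (u v w : ℝ × ℝ) : detp u (v + w) = detp u v + detp u w := by
  simp [detp, Prod.fst_add, Prod.snd_add]; ring
lemma detp_sub_right (u v w : ℝ × ℝ) : detp u (v - w) = detp u v - detp u w := by
  simp [detp, Prod.fst_sub, Prod.snd_sub]; ring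

lemma exists_t (u v : ℝ × ℝ) (hu : u ≠ 0) (h : detp u v = 0) : ∃ t : ℝ, v = t • u := by
  by_cases h1 : u.1 ≠ 0
  · refine ⟨v.1 / u.1, ?_⟩
    have : v.2 = v.1 / u.1 * u.2 := by field_simp; simp [detp] at h; linarith
    rw [Prod.ext_iff]; constructor
    · simp [Prod.smul_fst]; field_simp
    · simp [Prod.smul_snd]; linarith
  · push_neg at h1
    have h2 : u.2 ≠ 0 := by
      intro h2; exact hu (Prod.ext h1 h2)
    refine ⟨v.2 / u.2, ?_⟩
    have hv1 : v.1 = 0 := by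
      simp [detp, h1] at h; tauto
    rw [Prod.ext_iff]; constructor
    · simp [Prod.smul_fst, h1, hv1]
    · simp [Prod.smul_snd]; field_simp

lemma opp_sides (P : Finset (ℝ × ℝ)) (hconv : StrictConvexPos P)
    (p q x y : ℝ × ℝ) (hp : p ∈ P) (hq : q ∈ P) (hx : x ∈ P) (hy : y ∈ P)
    (hpq : p ≠ q) (hxp : x ≠ p) (hxq : x ≠ q)
    (hu : 0 < detp (q - p) (x - p)) (hv : detp (q - p) (y - p) < 0) :
    detp (y - x) (p - x) * detp (y - x) (q - x) < 0 := by
  set u : ℝ := detp (q - p) (x - p) with hu_def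
  set v : ℝ := detp (q - p) (y - p) with hv_def
  have huv : 0 < u - v := by linarith
  have huv' : u - v ≠ 0 := ne_of_gt huv
  set l : ℝ := -v / (u - v) with hl_def
  set m : ℝ := u / (u - v) with hm_def
  have hl : 0 < l := div_pos (by linarith) huv
  have hm : 0 < m := div_pos hu huv
  have hlm : l + m = 1 := by rw [hl_def, hm_def]; field_simp; ring
  set c : ℝ × ℝ := l • x + m • y with hc_def
  -- c lies on the line pq
  have hkey : c - p = l • (x - p) + m • (y - p) := by
    refine Prod.ext ?_ ?_
    · simp only [hc_def, Prod.smul_fst, Prod.smul_snd, Prod.fst_sub, Prod.snd_sub,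
        Prod.fst_add, Prod.snd_add, smul_eq_mul]
      linear_combination p.1 * hlm
    · simp only [hc_def, Prod.smul_fst, Prod.smul_snd, Prod.fst_sub, Prod.snd_sub,
        Prod.fst_add, Prod.snd_add, smul_eq_mul]
      linear_combination p.2 * hlm
  have hdetc : detp (q - p) (c - p) = 0 := by
    rw [hkey, detp_add_right, detp_smul_right, detp_smul_right, ← hu_def, ← hv_def,
      hl_def, hm_def]
    field_simp
    ring
  have hqp : q - p ≠ 0 := sub_ne_zero.mpr (Ne.symm hpq)
  obtain ⟨t, ht⟩ := exists_t _ _ hqp hdetc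
  -- c in open segment x y and in hull
  have hcseg : c ∈ openSegment ℝ x y := ⟨l, m, hl, hm, hlm, rfl⟩
  have hxh : x ∈ convexHull ℝ (P : Set (ℝ × ℝ)) := subset_convexHull ℝ _ hx
  have hyh : y ∈ convexHull ℝ (P : Set (ℝ × ℝ)) := subset_convexHull ℝ _ hy
  have hph : p ∈ convexHull ℝ (P : Set (ℝ × ℝ)) := subset_convexHull ℝ _ hp
  have hqh : q ∈ convexHull ℝ (P : Set (ℝ × ℝ)) := subset_convexHull ℝ _ hq
  have hch : c ∈ convexHull ℝ (P : Set (ℝ × ℝ)) :=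
    (convex_convexHull ℝ _).openSegment_subset hxh hyh hcseg
  have hpe := hconv.2 p hp
  have hqe := hconv.2 q hq
  rw [mem_extremePoints] at hpe hqe
  have hc' : c = p + t • (q - p) := by
    have := ht; rw [sub_eq_iff_eq_add] at this; rw [this]; abel
  -- show 0 < t < 1
  have ht0 : 0 < t := by
    rcases lt_trichotomy t 0 with h | h | h
    · -- p ∈ openSegment c q
      exfalso
      have h1t : (1:ℝ) - t ≠ 0 := by intro hh; linarith
      have hseg : p ∈ openSegment ℝ c q := by
        refine ⟨1 / (1 - t), -t / (1 - t),
          div_pos one_pos (by linarith), div_pos (by linarith) (by linarith), ?_, ?_⟩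
        · field_simp
          ring
        · rw [hc', smul_add, smul_smul, smul_sub]
          refine Prod.ext ?_ ?_ <;>
            · simp only [Prod.smul_fst, Prod.smul_snd, Prod.fst_add, Prod.snd_add,
                Prod.fst_sub, Prod.snd_sub, smul_eq_mul]
              field_simp
              ring
      exact hpq.symm (hpe.2 c hch q hqh hseg).2
    · -- t = 0 : c = p, p in open segment x y
      exfalso
      have hcp : c = p := by
        have : c - p = 0 := by rw [ht, h, zero_smul]
        exact sub_eq_zero.mp this
      exact hxp (hpe.2 x hxh y hyh (hcp ▸ hcseg)).1
    · exact h
  have ht1 : t < 1 := by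
    rcases lt_trichotomy t 1 with h | h | h
    · exact h
    · -- t = 1 : c = q
      exfalso
      have hcq : c = q := by
        have h2 : c - p = q - p := by rw [ht, h, one_smul]
        exact sub_left_injective.eq_iff.mp h2
      exact hxq (hqe.2 x hxh y hyh (hcq ▸ hcseg)).1
    · -- q ∈ openSegment p c
      exfalso
      have htne : t ≠ 0 := by positivity
      have hseg : q ∈ openSegment ℝ p c := by
        refine ⟨1 - 1 / t, 1 / t, by
          have : 1 / t < 1 := by rw [div_lt_one ht0]; linarith
          linarith, by positivity, by ring, ?_⟩
        rw [hc', smul_add, smul_smul, smul_sub]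
        refine Prod.ext ?_ ?_ <;>
          · simp only [Prod.smul_fst, Prod.smul_snd, Prod.fst_add, Prod.snd_add,
              Prod.fst_sub, Prod.snd_sub, smul_eq_mul]
            field_simp
            ring
      exact hpq (hqe.2 p hph c hch hseg).1
  -- now compute the two determinants
  have hK : detp (y - x) (q - p) = u - v := by
    rw [detp_comm]
    have h3 : detp (q - p) (y - x) = v - u := by
      have h4 : y - x = (y - p) - (x - p) := by abel
      rw [h4, detp_sub_right, ← hu_def, ← hv_def]
    rw [h3]; ring
  have hcx : c - x = m • (y - x) := by
    refine Prod.ext ?_ ?_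
    · simp only [hc_def, Prod.smul_fst, Prod.smul_snd, Prod.fst_sub, Prod.snd_sub,
        Prod.fst_add, Prod.snd_add, smul_eq_mul]
      linear_combination x.1 * hlm
    · simp only [hc_def, Prod.smul_fst, Prod.smul_snd, Prod.fst_sub, Prod.snd_sub,
        Prod.fst_add, Prod.snd_add, smul_eq_mul]
      linear_combination x.2 * hlm
  have h1 : detp (y - x) (p - x) = -t * (u - v) := by
    have hpx : p - x = (-t) • (q - p) + m • (y - x) := by
      have h5 : p - c = (-t) • (q - p) := by
        rw [neg_smul, ← ht]; abel
      have h6 : p - x = (p - c) + (c - x) := by abel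
      rw [h6, h5, hcx]
    rw [hpx, detp_add_right, detp_smul_right, detp_smul_right, detp_self, hK]; ring
  have h2 : detp (y - x) (q - x) = (1 - t) * (u - v) := by
    have hqx : q - x = (1 - t) • (q - p) + m • (y - x) := by
      have h5 : q - c = (1 - t) • (q - p) := by
        rw [sub_smul, one_smul, ← ht]; abel
      have h6 : q - x = (q - c) + (c - x) := by abel
      rw [h6, h5, hcx]
    rw [hqx, detp_add_right, detp_smul_right, detp_smul_right, detp_self, hK]; ring
  rw [h1, h2]
  nlinarith [mul_pos (mul_pos ht0 (show (0:ℝ) < 1 - t by linarith)) (mul_pos huv huv)]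

lemma hull_subset_halfplane (x y : ℝ × ℝ) (S : Set (ℝ × ℝ))
    (hS : S ⊆ {z | 0 ≤ detp (y - x) (z - x)}) :
    convexHull ℝ S ⊆ {z | 0 ≤ detp (y - x) (z - x)} := by
  apply convexHull_min hS
  have h : {z : ℝ × ℝ | 0 ≤ detp (y - x) (z - x)}
      = {z : ℝ × ℝ | detp (y - x) x ≤ detp (y - x) z} := by
    ext z; simp [detp_sub_right, sub_nonneg]
  rw [h]
  exact convex_halfSpace_ge
    ⟨fun a b => detp_add_right _ _ _, fun c a => by
      simpa [smul_eq_mul] using detp_smul_right (y - x) a c⟩ _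

lemma disjoint_interiors (x y r s : ℝ × ℝ) (hxy : x ≠ y)
    (hr : 0 < detp (y - x) (r - x)) (hs : detp (y - x) (s - x) < 0) :
    ¬ (interior (convexHull ℝ ({r, x, y} : Set (ℝ × ℝ))) ∩
        interior (convexHull ℝ ({s, x, y} : Set (ℝ × ℝ)))).Nonempty := by
  rintro ⟨z, hz1, hz2⟩
  set w : ℝ × ℝ := y - x with hw_def
  have hw : w ≠ 0 := sub_ne_zero.mpr (Ne.symm hxy)
  have hH1 : convexHull ℝ ({r, x, y} : Set (ℝ × ℝ)) ⊆ {z | 0 ≤ detp w (z - x)} := by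
    apply hull_subset_halfplane
    intro z' hz'
    simp only [Set.mem_insert_iff, Set.mem_singleton_iff] at hz'
    simp only [Set.mem_setOf_eq]
    rcases hz' with h | h | h <;> rw [h]
    · exact le_of_lt hr
    · rw [sub_self]; simp [detp]
    · rw [← hw_def, detp_self]
  have hflip : ∀ z : ℝ × ℝ, detp (x - y) (z - y) = -detp w (z - x) := by
    intro z'
    have h1 : detp w (z' - y) = detp w (z' - x) := by
      have h2 : z' - y = (z' - x) - (y - x) := by abel
      rw [h2, detp_sub_right, ← hw_def, detp_self, sub_zero]
    have h3 : x - y = -w := by rw [hw_def]; abel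
    rw [h3, ← h1]
    simp [detp, Prod.fst_neg, Prod.snd_neg]
    ring
  have hH2 : convexHull ℝ ({s, x, y} : Set (ℝ × ℝ)) ⊆ {z | 0 ≤ detp (x - y) (z - y)} := by
    apply hull_subset_halfplane
    intro z' hz'
    simp only [Set.mem_insert_iff, Set.mem_singleton_iff] at hz'
    simp only [Set.mem_setOf_eq]
    rcases hz' with h | h | h <;> rw [h, hflip]
    · linarith
    · rw [sub_self]; simp [detp]
    · rw [← hw_def, detp_self]; simp
  have hz1' : 0 ≤ detp w (z - x) := hH1 (interior_subset hz1)
  have hz2' : 0 ≤ detp (x - y) (z - y) := hH2 (interior_subset hz2)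
  rw [hflip] at hz2'
  have hz0 : detp w (z - x) = 0 := le_antisymm (by linarith) hz1'
  obtain ⟨ε, hε, hball⟩ := Metric.isOpen_iff.mp isOpen_interior z hz1
  set nvec : ℝ × ℝ := (w.2, -w.1) with hn_def
  have hn0 : nvec ≠ 0 := by
    intro h
    apply hw
    rw [Prod.ext_iff] at h ⊢
    simp only [hn_def, Prod.fst_zero, Prod.snd_zero, neg_eq_zero] at h
    exact ⟨h.2, h.1⟩
  have hnnorm : 0 < ‖nvec‖ := norm_pos_iff.mpr hn0
  set δ : ℝ := ε / (2 * ‖nvec‖) with hδ_def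
  have hδ : 0 < δ := by positivity
  have hmem : z + δ • nvec ∈ Metric.ball z ε := by
    rw [Metric.mem_ball, dist_eq_norm]
    have h4 : z + δ • nvec - z = δ • nvec := by abel
    rw [h4, norm_smul, Real.norm_eq_abs, abs_of_pos hδ]
    have h5 : δ * ‖nvec‖ = ε / 2 := by
      rw [hδ_def]; field_simp
    rw [h5]; linarith
  have hup : 0 ≤ detp w (z + δ • nvec - x) := hH1 (interior_subset (hball hmem))
  have hcomp : detp w (z + δ • nvec - x) = detp w (z - x) + δ * detp w nvec := by
    have h6 : z + δ • nvec - x = (z - x) + δ • nvec := by abel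
    rw [h6, detp_add_right, detp_smul_right]
  have hneg : detp w nvec < 0 := by
    have h7 : detp w nvec = -(w.1 ^ 2 + w.2 ^ 2) := by simp [detp, hn_def]; ring
    have hw' : w.1 ≠ 0 ∨ w.2 ≠ 0 := by
      by_contra h
      push_neg at h
      exact hw (Prod.ext h.1 h.2)
    rw [h7]
    rcases hw' with h | h
    · have : 0 < w.1 ^ 2 := by positivity
      nlinarith [sq_nonneg w.2]
    · have : 0 < w.2 ^ 2 := by positivity
      nlinarith [sq_nonneg w.1]
  rw [hcomp, hz0, zero_add] at hup
  exact absurd hup (not_le.mpr (mul_neg_of_pos_of_neg hδ hneg))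


theorem intersecting_family_one_point_opposite_sides (n : ℕ) (hn : 3 ≤ n)
    (P : Finset (ℝ × ℝ)) (hPcard : P.card = n) (hconv : StrictConvexPos P)
    (p q : ℝ × ℝ) (hp : p ∈ P) (hq : q ∈ P) (hpq : p ≠ q)
    (a b : ℕ)
    (ha : a = Set.ncard {z : ℝ × ℝ | z ∈ P ∧ 0 < detp (q - p) (z - p)})
    (hb : b = Set.ncard {z : ℝ × ℝ | z ∈ P ∧ detp (q - p) (z - p) < 0})
    (𝓕 : Finset (Finset (ℝ × ℝ)))
    (h𝓕 : ∀ T ∈ 𝓕, T ⊆ P ∧ T.card = 3 ∧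
      ((p ∈ T ∧ q ∉ T) ∨ (p ∉ T ∧ q ∈ T)) ∧
      (∀ x ∈ T, ∀ y ∈ T, x ≠ p → x ≠ q → y ≠ p → y ≠ q → x ≠ y →
        detp (q - p) (x - p) * detp (q - p) (y - p) < 0))
    (hint : ∀ T₁ ∈ 𝓕, ∀ T₂ ∈ 𝓕,
      (interior (convexHull ℝ (T₁ : Set (ℝ × ℝ))) ∩
        interior (convexHull ℝ (T₂ : Set (ℝ × ℝ)))).Nonempty) :
    𝓕.card ≤ a * b := by
  classical
  set d : ℝ × ℝ → ℝ := fun z => detp (q - p) (z - p) with hd_def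
  have hdp : d p = 0 := by simp [hd_def, detp]
  have hdq : d q = 0 := by simp [hd_def, detp_self]
  set A : Finset (ℝ × ℝ) := P.filter (fun z => 0 < d z) with hA_def
  set B : Finset (ℝ × ℝ) := P.filter (fun z => d z < 0) with hB_def
  have haA : a = A.card := by
    rw [ha]
    have h : {z : ℝ × ℝ | z ∈ P ∧ 0 < detp (q - p) (z - p)} = (A : Set (ℝ × ℝ)) := by
      ext z; simp [hA_def, Finset.mem_filter, hd_def]
    rw [h, Set.ncard_coe_finset]
  have hbB : b = B.card := by
    rw [hb]
    have h : {z : ℝ × ℝ | z ∈ P ∧ detp (q - p) (z - p) < 0} = (B : Set (ℝ × ℝ)) := by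
      ext z; simp [hB_def, Finset.mem_filter, hd_def]
    rw [h, Set.ncard_coe_finset]
  -- structure of each triangle
  have hstruct : ∀ T ∈ 𝓕, ∃ x y r, T = {r, x, y} ∧ (r = p ∨ r = q) ∧
      x ∈ A ∧ y ∈ B ∧
      T.filter (fun z => 0 < d z) = {x} ∧ T.filter (fun z => d z < 0) = {y} := by
    intro T hT
    obtain ⟨hTP, hT3, hTpq, hTopp⟩ := h𝓕 T hT
    -- get the special vertex r and the other two vertices
    have hex : ∃ r, (r = p ∨ r = q) ∧ r ∈ T ∧ p ∉ T.erase r ∧ q ∉ T.erase r := by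
      rcases hTpq with ⟨h1, h2⟩ | ⟨h1, h2⟩
      · exact ⟨p, Or.inl rfl, h1, Finset.notMem_erase _ _,
          fun hc => h2 (Finset.mem_of_mem_erase hc)⟩
      · exact ⟨q, Or.inr rfl, h2, fun hc => h1 (Finset.mem_of_mem_erase hc),
          Finset.notMem_erase _ _⟩
    obtain ⟨r, hr, hrT, hpE, hqE⟩ := hex
    have hdr : d r = 0 := by rcases hr with rfl | rfl <;> assumption
    have hcard2 : (T.erase r).card = 2 := by
      rw [Finset.card_erase_of_mem hrT, hT3]
    obtain ⟨u, v, huv, hEuv⟩ := Finset.card_eq_two.mp hcard2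
    have huT : u ∈ T.erase r := by rw [hEuv]; simp
    have hvT : v ∈ T.erase r := by rw [hEuv]; simp
    have huP : u ∈ P := hTP (Finset.mem_of_mem_erase huT)
    have hvP : v ∈ P := hTP (Finset.mem_of_mem_erase hvT)
    have hup : u ≠ p := fun h => hpE (h ▸ huT)
    have huq : u ≠ q := fun h => hqE (h ▸ huT)
    have hvp : v ≠ p := fun h => hpE (h ▸ hvT)
    have hvq : v ≠ q := fun h => hqE (h ▸ hvT)
    have hTeq : T = {r, u, v} := by
      have := Finset.insert_erase hrT
      rw [hEuv] at this
      rw [← this]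
    have hprod : d u * d v < 0 := hTopp u (Finset.mem_of_mem_erase huT)
      v (Finset.mem_of_mem_erase hvT) hup huq hvp hvq huv
    -- pick the positive one as x
    have hkey : ∀ x y : ℝ × ℝ, x ∈ P → y ∈ P → T = {r, x, y} → x ≠ y → 0 < d x → d y < 0 →
        ∃ x' y' r', T = {r', x', y'} ∧ (r' = p ∨ r' = q) ∧ x' ∈ A ∧ y' ∈ B ∧
          T.filter (fun z => 0 < d z) = {x'} ∧ T.filter (fun z => d z < 0) = {y'} := by
      intro x y hxP hyP hTxy hxy hdx hdy
      refine ⟨x, y, r, hTxy, hr, ?_, ?_, ?_, ?_⟩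
      · rw [hA_def, Finset.mem_filter]; exact ⟨hxP, hdx⟩
      · rw [hB_def, Finset.mem_filter]; exact ⟨hyP, hdy⟩
      · ext z
        simp only [Finset.mem_filter, hTxy, Finset.mem_insert, Finset.mem_singleton]
        constructor
        · rintro ⟨rfl | rfl | rfl, hz⟩
          · exact absurd hz (by rw [hdr]; exact lt_irrefl 0)
          · rfl
          · linarith
        · rintro rfl; exact ⟨Or.inr (Or.inl rfl), hdx⟩
      · ext z
        simp only [Finset.mem_filter, hTxy, Finset.mem_insert, Finset.mem_singleton]
        constructor
        · rintro ⟨rfl | rfl | rfl, hz⟩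
          · exact absurd hz (by rw [hdr]; exact lt_irrefl 0)
          · linarith
          · rfl
        · rintro rfl; exact ⟨Or.inr (Or.inr rfl), hdy⟩
    rcases lt_trichotomy (d u) 0 with h | h | h
    · have hdv : 0 < d v := by nlinarith
      exact hkey v u hvP huP (by rw [hTeq]; ext z; simp; tauto) huv.symm hdv h
    · exfalso; rw [h] at hprod; simp at hprod
    · have hdv : d v < 0 := by nlinarith
      exact hkey u v huP hvP hTeq huv h hdv
  -- the injection into A ×ˢ B
  set f : Finset (ℝ × ℝ) → (ℝ × ℝ) × (ℝ × ℝ) :=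
    fun T => ((T.filter (fun z => 0 < d z)).sum id, (T.filter (fun z => d z < 0)).sum id)
    with hf_def
  have hfval : ∀ T ∈ 𝓕, ∀ x y r : ℝ × ℝ,
      T.filter (fun z => 0 < d z) = {x} → T.filter (fun z => d z < 0) = {y} →
      f T = (x, y) := by
    intro T hT x y r h1 h2
    rw [hf_def]
    simp only [h1, h2, Finset.sum_singleton, id]
  -- key: mixed pairs give disjoint interiors
  have hmix : ∀ x y : ℝ × ℝ, x ∈ A → y ∈ B → ¬ ((interior (convexHull ℝ
      (({p, x, y} : Finset (ℝ × ℝ)) : Set (ℝ × ℝ))) ∩ interior (convexHull ℝ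
      (({q, x, y} : Finset (ℝ × ℝ)) : Set (ℝ × ℝ)))).Nonempty) := by
    intro x y hxA hyB
    rw [hA_def, Finset.mem_filter] at hxA
    rw [hB_def, Finset.mem_filter] at hyB
    obtain ⟨hxP, hdx⟩ := hxA
    obtain ⟨hyP, hdy⟩ := hyB
    have hxp : x ≠ p := fun h => by rw [h, hdp] at hdx; exact lt_irrefl 0 hdx
    have hxq : x ≠ q := fun h => by rw [h, hdq] at hdx; exact lt_irrefl 0 hdx
    have hxy : x ≠ y := fun h => by rw [h] at hdx; linarith
    have hopp := opp_sides P hconv p q x y hp hq hxP hyP hpq hxp hxq hdx hdy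
    have hcoe1 : (({p, x, y} : Finset (ℝ × ℝ)) : Set (ℝ × ℝ)) = {p, x, y} := by simp
    have hcoe2 : (({q, x, y} : Finset (ℝ × ℝ)) : Set (ℝ × ℝ)) = {q, x, y} := by simp
    rw [hcoe1, hcoe2]
    rcases lt_trichotomy (detp (y - x) (p - x)) 0 with h | h | h
    · have h2 : 0 < detp (y - x) (q - x) := by nlinarith
      intro ⟨z, hz1, hz2⟩
      exact disjoint_interiors x y q p hxy h2 h ⟨z, hz2, hz1⟩
    · rw [h] at hopp; simp at hopp
    · have h2 : detp (y - x) (q - x) < 0 := by nlinarith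
      exact disjoint_interiors x y p q hxy h h2
  have hinj : Set.InjOn f ↑𝓕 := by
    intro T₁ h₁ T₂ h₂ hf
    obtain ⟨x₁, y₁, r₁, hT₁, hr₁, hx₁, hy₁, hfx₁, hfy₁⟩ := hstruct T₁ h₁
    obtain ⟨x₂, y₂, r₂, hT₂, hr₂, hx₂, hy₂, hfx₂, hfy₂⟩ := hstruct T₂ h₂
    rw [hfval T₁ h₁ x₁ y₁ r₁ hfx₁ hfy₁, hfval T₂ h₂ x₂ y₂ r₂ hfx₂ hfy₂] at hf
    injection hf with hx hy
    subst hx; subst hy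
    rcases hr₁ with rfl | rfl <;> rcases hr₂ with rfl | rfl
    · rw [hT₁, hT₂]
    · exfalso
      exact hmix x₁ y₁ hx₁ hy₁ (by rw [← hT₁, ← hT₂]; exact hint T₁ h₁ T₂ h₂)
    · exfalso
      exact hmix x₁ y₁ hx₁ hy₁ (by rw [← hT₁, ← hT₂]; exact hint T₂ h₂ T₁ h₁)
    · rw [hT₁, hT₂]
  -- counting
  have himg : 𝓕.image f ⊆ A ×ˢ B := by
    intro z hz
    obtain ⟨T, hT, hfT⟩ := Finset.mem_image.mp hz
    obtain ⟨x, y, r, hTeq, hr, hxA, hyB, hfx, hfy⟩ := hstruct T hT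
    rw [hfval T hT x y r hfx hfy] at hfT
    rw [← hfT, Finset.mem_product]
    exact ⟨hxA, hyB⟩
  calc 𝓕.card = (𝓕.image f).card := (Finset.card_image_of_injOn hinj).symm
    _ ≤ (A ×ˢ B).card := Finset.card_le_card himg
    _ = A.card * B.card := Finset.card_product A B
    _ = a * b := by rw [haA, hbB]
end

section
/- Let 0 ≤ θ₁ < θ₂ < θ₃ < θ₄ < θ₅ < θ₆ < 2π and for each i let pᵢ = (cos θᵢ, sin θᵢ) ∈ ℝ². Then the interior of the convex hull of {p₁, p₂, p₃} and the interior of the convex hull of {p₄, p₅, p₆} are disjoint. -/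
/-!
The chord through `p₃` and `p₆` separates the two triangles. A linear functional `f` constant along
that chord satisfies `f p(φ) - f p₃ = 4 sin((θ₆ - θ₃)/2) sin((θ₆ - φ)/2) sin((φ - θ₃)/2)`, which is
negative on the arc through `p₁, p₂` and positive on the arc through `p₄, p₅`. So the two convex hulls
lie in opposite closed half-planes of `f`, and the interiors of these half-planes are disjoint.
-/

open Real

theorem Real.sin_add_sin_sub_sin_add (x y : ℝ) :
    sin x + sin y - sin (x + y) = 4 * sin ((x + y) / 2) * sin (x / 2) * sin (y / 2) := by
  obtain ⟨u, rfl⟩ : ∃ u, x = 2 * u := ⟨x / 2, by ring⟩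
  obtain ⟨v, rfl⟩ : ∃ v, y = 2 * v := ⟨y / 2, by ring⟩
  rw [show (2 * u + 2 * v) / 2 = u + v by ring, show 2 * u / 2 = u by ring,
    show 2 * v / 2 = v by ring, ← mul_add, sin_two_mul, sin_two_mul, sin_two_mul, sin_add, cos_add]
  linear_combination (-2 * sin u * cos u) * sin_sq_add_cos_sq v +
    (-2 * sin v * cos v) * sin_sq_add_cos_sq u

theorem interior_inter_interior_eq_empty_of_le_of_ge {E : Type*} [AddCommGroup E]
    [TopologicalSpace E] [ContinuousAdd E] [Module ℝ E] [ContinuousSMul ℝ E]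
    (f : StrongDual ℝ E) (hf : f ≠ 0) {s t : Set E} {c : ℝ}
    (hs : ∀ x ∈ s, f x ≤ c) (ht : ∀ x ∈ t, c ≤ f x) : interior s ∩ interior t = ∅ := by
  have hopen := f.isOpenMap_of_ne_zero hf
  have hs' : interior s ⊆ f ⁻¹' Set.Iio c := by
    rw [← interior_Iic, hopen.preimage_interior_eq_interior_preimage f.continuous]
    exact interior_mono hs
  have ht' : interior t ⊆ f ⁻¹' Set.Ioi c := by
    rw [← interior_Ici, hopen.preimage_interior_eq_interior_preimage f.continuous]
    exact interior_mono ht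
  exact Set.eq_empty_of_forall_notMem fun x hx => lt_asymm (a := f x) (hs' hx.1) (ht' hx.2)

theorem interior_convexHull_inter_eq_empty_of_le_of_ge {E : Type*} [AddCommGroup E]
    [TopologicalSpace E] [ContinuousAdd E] [Module ℝ E] [ContinuousSMul ℝ E]
    (f : StrongDual ℝ E) (hf : f ≠ 0) {s t : Set E} {c : ℝ}
    (hs : ∀ x ∈ s, f x ≤ c) (ht : ∀ x ∈ t, c ≤ f x) :
    interior (convexHull ℝ s) ∩ interior (convexHull ℝ t) = ∅ :=
  interior_inter_interior_eq_empty_of_le_of_ge f hf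
    (convexHull_min hs (convex_halfSpace_le f.isLinear c))
    (convexHull_min ht (convex_halfSpace_ge f.isLinear c))

/-- The linear functional whose level set through `(cos α, sin α)` is the chord to `(cos β, sin β)`. -/
noncomputable def chordFunctional (α β : ℝ) : StrongDual ℝ (ℝ × ℝ) :=
  (sin β - sin α) • ContinuousLinearMap.fst ℝ ℝ ℝ + (cos α - cos β) • ContinuousLinearMap.snd ℝ ℝ ℝ

theorem chordFunctional_apply_sub (α β φ : ℝ) :
    chordFunctional α β (cos φ, sin φ) - chordFunctional α β (cos α, sin α) =
      4 * sin ((β - α) / 2) * sin ((β - φ) / 2) * sin ((φ - α) / 2) := by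
  have h := sin_add_sin_sub_sin_add (β - φ) (φ - α)
  rw [sub_add_sub_cancel, sin_sub, sin_sub, sin_sub] at h
  simp only [chordFunctional, add_apply, smul_apply,
    ContinuousLinearMap.coe_fst', ContinuousLinearMap.coe_snd', smul_eq_mul]
  linear_combination h

theorem chordFunctional_apply_right (α β : ℝ) :
    chordFunctional α β (cos β, sin β) = chordFunctional α β (cos α, sin α) := by
  have h := chordFunctional_apply_sub α β β
  rwa [sub_self, zero_div, sin_zero, mul_zero, zero_mul, sub_eq_zero] at h

theorem chordFunctional_apply_lt {α β φ : ℝ} (hαφ : α < φ) (hφβ : φ < β) (hβα : β - α < 2 * π) :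
    chordFunctional α β (cos α, sin α) < chordFunctional α β (cos φ, sin φ) := by
  rw [← sub_pos, chordFunctional_apply_sub]
  have h₁ : 0 < sin ((β - α) / 2) := sin_pos_of_pos_of_lt_pi (by linarith) (by linarith)
  have h₂ : 0 < sin ((β - φ) / 2) := sin_pos_of_pos_of_lt_pi (by linarith) (by linarith)
  have h₃ : 0 < sin ((φ - α) / 2) := sin_pos_of_pos_of_lt_pi (by linarith) (by linarith)
  positivity

theorem chordFunctional_apply_lt_of_lt_left {α β φ : ℝ} (hαβ : α < β) (hφ : β - 2 * π < φ)
    (hφα : φ < α) : chordFunctional α β (cos φ, sin φ) < chordFunctional α β (cos α, sin α) := by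
  rw [← sub_neg, chordFunctional_apply_sub]
  have h₁ : 0 < sin ((β - α) / 2) := sin_pos_of_pos_of_lt_pi (by linarith) (by linarith)
  have h₂ : 0 < sin ((β - φ) / 2) := sin_pos_of_pos_of_lt_pi (by linarith) (by linarith)
  have h₃ : sin ((φ - α) / 2) < 0 := sin_neg_of_neg_of_neg_pi_lt (by linarith) (by linarith)
  exact mul_neg_of_pos_of_neg (by positivity) h₃

theorem separated_arcs_disjoint_interiors (θ₁ θ₂ θ₃ θ₄ θ₅ θ₆ : ℝ)
    (h0 : 0 ≤ θ₁) (h12 : θ₁ < θ₂) (h23 : θ₂ < θ₃) (h34 : θ₃ < θ₄)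
    (h45 : θ₄ < θ₅) (h56 : θ₅ < θ₆) (h6 : θ₆ < 2 * Real.pi) :
    interior (convexHull ℝ
        ({(Real.cos θ₁, Real.sin θ₁), (Real.cos θ₂, Real.sin θ₂),
          (Real.cos θ₃, Real.sin θ₃)} : Set (ℝ × ℝ))) ∩
      interior (convexHull ℝ
        ({(Real.cos θ₄, Real.sin θ₄), (Real.cos θ₅, Real.sin θ₅),
          (Real.cos θ₆, Real.sin θ₆)} : Set (ℝ × ℝ))) = ∅ := by
  set f := chordFunctional θ₃ θ₆
  have h₃₆ : θ₃ < θ₆ := by linarith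
  have left {φ} (hφ : 0 ≤ φ) (hφ₃ : φ < θ₃) : f (cos φ, sin φ) ≤ f (cos θ₃, sin θ₃) :=
    (chordFunctional_apply_lt_of_lt_left h₃₆ (by linarith) hφ₃).le
  have right {φ} (hφ₃ : θ₃ < φ) (hφ₆ : φ < θ₆) : f (cos θ₃, sin θ₃) < f (cos φ, sin φ) :=
    chordFunctional_apply_lt hφ₃ hφ₆ (by linarith)
  have hf : f ≠ 0 := fun h => by simpa [h] using right h34 (by linarith)
  refine interior_convexHull_inter_eq_empty_of_le_of_ge f hf (c := f (cos θ₃, sin θ₃)) ?_ ?_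
  · simp only [Set.forall_mem_insert, Set.mem_singleton_iff, forall_eq]
    exact ⟨left h0 (by linarith), left (by linarith) h23, le_rfl⟩
  · simp only [Set.forall_mem_insert, Set.mem_singleton_iff, forall_eq]
    exact ⟨(right h34 (by linarith)).le, (right (by linarith) h56).le,
      (chordFunctional_apply_right θ₃ θ₆).ge⟩
end

section
/- Let 0 ≤ θ₁ < θ₂ < θ₃ < θ₄ < θ₅ < θ₆ < 2π and for each i let pᵢ = (cos θᵢ, sin θᵢ) ∈ ℝ². Then the interior of the convex hull of {p₁, p₃, p₅} and the interior of the convex hull of {p₂, p₄, p₆} have a common point. -/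
/-!
A line meets the unit circle in at most two points, so both triangles are nondegenerate.
If their interiors were disjoint, a nonzero linear functional `f` and a constant `c` would
separate them: `f ≤ c` at `p₁, p₃, p₅` and `c ≤ f` at `p₂, p₄, p₆`. By the intermediate value
theorem the line `f = c` then meets each of the arcs `[θ₁, θ₂]`, `[θ₃, θ₄]`, `[θ₅, θ₆]`, which
puts three distinct points of the circle on one line.
-/

open Real Set Module

theorem collinear_of_forall_apply_eq {k E : Type*} [Field k] [AddCommGroup E] [Module k E]
    [FiniteDimensional k E] (hE : finrank k E = 2) {f : Dual k E} (hf : f ≠ 0) {c : k}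
    {s : Set E} (hs : ∀ x ∈ s, f x = c) : Collinear k s := by
  have hspan : vectorSpan k s ≤ LinearMap.ker f := by
    rw [vectorSpan_def, Submodule.span_le]
    rintro _ ⟨x, hx, y, hy, rfl⟩
    simp [hs x hx, hs y hy]
  have hker : finrank k (LinearMap.ker f) = 1 := by
    have := Dual.finrank_ker_add_one_of_ne_zero hf
    omega
  rw [collinear_iff_finrank_le_one]
  exact hker ▸ Submodule.finrank_mono hspan

theorem interior_convexHull_nonempty_of_not_collinear {V : Type*} [NormedAddCommGroup V]
    [NormedSpace ℝ V] [FiniteDimensional ℝ V] (hV : finrank ℝ V = 2) {p q r : V}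
    (h : ¬Collinear ℝ {p, q, r}) : (interior (convexHull ℝ {p, q, r})).Nonempty := by
  have hind := affineIndependent_iff_not_collinear_set.2 h
  have hspan := hind.affineSpan_eq_top_iff_card_eq_finrank_add_one.2 (by simp [hV])
  simp_rw [Matrix.range_cons, Matrix.range_empty, singleton_union, insert_empty_eq] at hspan
  rwa [interior_convexHull_nonempty_iff_affineSpan_eq_top]

theorem Convex.disjoint_interior_of_disjoint_interiors {E : Type*} [TopologicalSpace E]
    [AddCommGroup E] [Module ℝ E] [IsTopologicalAddGroup E] [ContinuousSMul ℝ E]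
    {s t : Set E} (ht : Convex ℝ t) (ht' : (interior t).Nonempty)
    (h : Disjoint (interior s) (interior t)) : Disjoint (interior s) t := by
  refine (h.closure_right isOpen_interior).mono_right ?_
  rw [ht.closure_interior_eq_closure_of_nonempty_interior ht']
  exact subset_closure

theorem not_collinear_of_sq_add_sq_eq_one {p q r : ℝ × ℝ}
    (hp : p.1 ^ 2 + p.2 ^ 2 = 1) (hq : q.1 ^ 2 + q.2 ^ 2 = 1) (hr : r.1 ^ 2 + r.2 ^ 2 = 1)
    (hpq : p ≠ q) (hpr : p ≠ r) (hqr : q ≠ r) : ¬Collinear ℝ {p, q, r} := by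
  rw [collinear_iff_of_mem (mem_insert p _)]
  rintro ⟨v, hv⟩
  obtain ⟨s, rfl⟩ := hv q (by simp)
  obtain ⟨t, rfl⟩ := hv r (by simp)
  simp only [vadd_eq_add, Prod.fst_add, Prod.snd_add, Prod.smul_fst, Prod.smul_snd,
    smul_eq_mul] at hq hr
  have hs : s ≠ 0 := by rintro rfl; simp at hpq
  have ht : t ≠ 0 := by rintro rfl; simp at hpr
  have hst : s ≠ t := by rintro rfl; simp at hqr
  -- `u ↦ (p + u • v).1 ^ 2 + (p + u • v).2 ^ 2 - 1` is a quadratic vanishing at `0`, `s`, `t`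
  have hs' : s * (v.1 ^ 2 + v.2 ^ 2) + 2 * (v.1 * p.1 + v.2 * p.2) = 0 :=
    (mul_eq_zero.1 (by linear_combination hq - hp : s * _ = 0)).resolve_left hs
  have ht' : t * (v.1 ^ 2 + v.2 ^ 2) + 2 * (v.1 * p.1 + v.2 * p.2) = 0 :=
    (mul_eq_zero.1 (by linear_combination hr - hp : t * _ = 0)).resolve_left ht
  have hv0 : v.1 ^ 2 + v.2 ^ 2 = 0 :=
    (mul_eq_zero.1 (by linear_combination hs' - ht' : (s - t) * _ = 0)).resolve_left
      (sub_ne_zero.2 hst)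
  have h1 : v.1 = 0 := by nlinarith [sq_nonneg v.1, sq_nonneg v.2]
  have h2 : v.2 = 0 := by nlinarith [sq_nonneg v.1, sq_nonneg v.2]
  exact hpq (by simp [Prod.ext_iff, h1, h2])

theorem injOn_cos_sin : InjOn (fun θ : ℝ => (cos θ, sin θ)) (Ico 0 (2 * π)) := by
  intro x hx y hy h
  simp only [Prod.mk.injEq] at h
  refine Circle.exp_injOn_Ico (by simp) hx hy (Circle.ext (Complex.ext ?_ ?_))
  · simpa [Circle.coe_exp, Complex.exp_ofReal_mul_I_re] using h.1
  · simpa [Circle.coe_exp, Complex.exp_ofReal_mul_I_im] using h.2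

theorem not_collinear_cos_sin {α β γ : ℝ} (hα : 0 ≤ α) (hαβ : α < β) (hβγ : β < γ)
    (hγ : γ < 2 * π) :
    ¬Collinear ℝ {(cos α, sin α), (cos β, sin β), (cos γ, sin γ)} := by
  have mem : ∀ θ, α ≤ θ → θ ≤ γ → θ ∈ Ico 0 (2 * π) := fun θ h₁ h₂ ↦
    ⟨hα.trans h₁, h₂.trans_lt hγ⟩
  have hα' := mem α le_rfl (hαβ.trans hβγ).le
  have hβ' := mem β hαβ.le hβγ.le
  have hγ' := mem γ (hαβ.trans hβγ).le le_rfl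
  exact not_collinear_of_sq_add_sq_eq_one (cos_sq_add_sin_sq α) (cos_sq_add_sin_sq β)
    (cos_sq_add_sin_sq γ) (injOn_cos_sin.ne hα' hβ' hαβ.ne)
    (injOn_cos_sin.ne hα' hγ' (hαβ.trans hβγ).ne) (injOn_cos_sin.ne hβ' hγ' hβγ.ne)

theorem alternating_arcs_intersecting_interiors (θ₁ θ₂ θ₃ θ₄ θ₅ θ₆ : ℝ)
    (h0 : 0 ≤ θ₁) (h12 : θ₁ < θ₂) (h23 : θ₂ < θ₃) (h34 : θ₃ < θ₄)
    (h45 : θ₄ < θ₅) (h56 : θ₅ < θ₆) (h6 : θ₆ < 2 * Real.pi) :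
    (interior (convexHull ℝ
        ({(Real.cos θ₁, Real.sin θ₁), (Real.cos θ₃, Real.sin θ₃),
          (Real.cos θ₅, Real.sin θ₅)} : Set (ℝ × ℝ))) ∩
      interior (convexHull ℝ
        ({(Real.cos θ₂, Real.sin θ₂), (Real.cos θ₄, Real.sin θ₄),
          (Real.cos θ₆, Real.sin θ₆)} : Set (ℝ × ℝ)))).Nonempty := by
  have hdim : finrank ℝ (ℝ × ℝ) = 2 := by simp
  have hT₁ := interior_convexHull_nonempty_of_not_collinear hdim
    (not_collinear_cos_sin h0 (h12.trans h23) (h34.trans h45) (by linarith))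
  have hT₂ := interior_convexHull_nonempty_of_not_collinear hdim
    (not_collinear_cos_sin (by linarith) (h23.trans h34) (h45.trans h56) h6)
  set T₁ : Set (ℝ × ℝ) := {(cos θ₁, sin θ₁), (cos θ₃, sin θ₃), (cos θ₅, sin θ₅)}
  set T₂ : Set (ℝ × ℝ) := {(cos θ₂, sin θ₂), (cos θ₄, sin θ₄), (cos θ₆, sin θ₆)}
  rw [← not_disjoint_iff_nonempty_inter]
  intro hdisj
  obtain ⟨f, c, hf, hle, hge⟩ := geometric_hahn_banach_of_nonempty_interior
    (convex_convexHull ℝ _) (convex_convexHull ℝ _)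
    ((convex_convexHull ℝ _).disjoint_interior_of_disjoint_interiors hT₂ hdisj) hT₁
    (hT₂.mono interior_subset)
  have crossing : ∀ {α β : ℝ}, α ≤ β → (cos α, sin α) ∈ T₁ → (cos β, sin β) ∈ T₂ →
      ∃ z ∈ Icc α β, f (cos z, sin z) = c := fun hαβ hα hβ ↦
    intermediate_value_Icc hαβ (by fun_prop)
      ⟨hle _ (subset_convexHull ℝ _ hα), hge _ (subset_convexHull ℝ _ hβ)⟩
  obtain ⟨z₁, hz₁, e₁⟩ := crossing h12.le (by simp [T₁]) (by simp [T₂])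
  obtain ⟨z₂, hz₂, e₂⟩ := crossing h34.le (by simp [T₁]) (by simp [T₂])
  obtain ⟨z₃, hz₃, e₃⟩ := crossing h56.le (by simp [T₁]) (by simp [T₂])
  have hline : Collinear ℝ {(cos z₁, sin z₁), (cos z₂, sin z₂), (cos z₃, sin z₃)} :=
    collinear_of_forall_apply_eq (f := f.toLinearMap) (c := c) hdim
      (fun h ↦ hf (ContinuousLinearMap.coe_injective h)) (by simp [e₁, e₂, e₃])
  exact not_collinear_cos_sin (h0.trans hz₁.1) (by linarith [hz₁.2, hz₂.1])
    (by linarith [hz₂.2, hz₃.1]) (by linarith [hz₃.2]) hline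
end

section
/- Let P and Q be finite sets of points in the plane, each in strictly convex position, and let f : P → Q be a bijection that preserves the orientation of every triple, i.e., for all pairwise distinct a, b, c ∈ P the sign of det(b − a, c − a) equals the sign of det(f(b) − f(a), f(c) − f(a)). Then for any two 3-element subsets {a,b,c} and {d,e,g} of P, the interiors of the convex hulls of {a,b,c} and {d,e,g} have a common point if and only if the interiors of the convex hulls of {f(a),f(b),f(c)} and {f(d),f(e),f(g)} have a common point. -/
/-!
When no three of the six vertices are collinear, the interiors of two triangles meet iff the
triangles coincide, a vertex of one lies inside the other, or an edge of one properly crosses an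
edge of the other. Each alternative is a condition on orientations of vertex triples: a point is
inside a triangle iff it lies on the same side of every edge as the opposite vertex, and two edges
cross iff each separates the endpoints of the other. Hence an orientation-preserving bijection
preserves the alternatives, and with them the intersection of the interiors.

For the hard direction, walk from a common interior point towards a vertex of the second triangle
lying outside the first one. The walk leaves the first triangle through an edge, at a point interior
to the second; walking along that edge out of the second triangle yields a crossing.
-/

open Set Filter Topology

section Segment

variable {E : Type*} [AddCommGroup E] [Module ℝ E]

theorem sbtw_of_mem_openSegment {x y z : E} (h : y ∈ openSegment ℝ x z) (hxz : x ≠ z) :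
    Sbtw ℝ x y z :=
  sbtw_iff_mem_image_Ioo_and_ne.mpr ⟨by rwa [← openSegment_eq_image_lineMap], hxz⟩

variable [TopologicalSpace E] [IsTopologicalAddGroup E] [ContinuousSMul ℝ E]

theorem exists_mem_openSegment_diff_interior {s : Set E} (hs : IsClosed s) {p w : E}
    (hp : p ∈ interior s) (hw : w ∉ s) : ∃ r ∈ openSegment ℝ p w, r ∈ s \ interior s := by
  by_contra! h
  have hcover : segment ℝ p w ⊆ interior s ∪ sᶜ := by
    intro r hr
    by_cases hrs : r ∈ s
    · obtain rfl | hrp := eq_or_ne r p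
      · exact Or.inl hp
      have hro := mem_openSegment_of_ne_left_right hrp.symm (by rintro rfl; exact hw hrs) hr
      exact Or.inl (by_contra fun hri => h r hro ⟨hrs, hri⟩)
    · exact Or.inr hrs
  obtain ⟨r, -, hr, hr'⟩ := (convex_segment p w).isPreconnected _ _ isOpen_interior
    hs.isOpen_compl hcover ⟨p, left_mem_segment ℝ p w, hp⟩ ⟨w, right_mem_segment ℝ p w, hw⟩
  exact hr' (interior_subset hr)

theorem Convex.interior_inter_nonempty_of_inter_nonempty {s t : Set E} (hs : Convex ℝ s)
    (hs' : (interior s).Nonempty) (ht : IsOpen t) (h : (s ∩ t).Nonempty) :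
    (interior s ∩ t).Nonempty := by
  rw [← closure_inter_open_nonempty_iff ht, hs.closure_interior_eq_closure_of_nonempty_interior hs']
  exact h.mono (inter_subset_inter_left t subset_closure)

end Segment

theorem eventually_pos_lineMap {a b : ℝ} (ha : 0 ≤ a) (h : 0 < a ∨ 0 < b) :
    ∀ᶠ t in 𝓝[>] (0 : ℝ), 0 < AffineMap.lineMap a b t := by
  rcases h with ha' | hb
  · refine nhdsWithin_le_nhds ?_
    have := (AffineMap.lineMap_continuous (p := a) (q := b)).tendsto (0 : ℝ)
    rw [AffineMap.lineMap_apply_zero] at this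
    exact this.eventually (lt_mem_nhds ha')
  · filter_upwards [self_mem_nhdsWithin, Ioo_mem_nhdsGT one_pos] with t ht ht'
    rw [AffineMap.lineMap_apply_module]
    simp only [smul_eq_mul]
    nlinarith [ht.out, ht'.2]

theorem div_sub_mem_Ioo_of_mul_neg {A B : ℝ} (h : A * B < 0) : A / (A - B) ∈ Ioo (0 : ℝ) 1 := by
  rcases mul_neg_iff.mp h with ⟨hA, hB⟩ | ⟨hA, hB⟩
  · exact ⟨div_pos hA (by linarith), (div_lt_one (by linarith)).mpr (by linarith)⟩
  · exact ⟨div_pos_of_neg_of_neg hA (by linarith),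
      (div_lt_one_of_neg (by linarith)).mpr (by linarith)⟩

theorem mul_neg_of_mul_add_mul_eq_zero {a b A B : ℝ} (ha : 0 < a) (hb : 0 < b)
    (h : a * A + b * B = 0) (hAB : A ≠ 0 ∨ B ≠ 0) : A * B < 0 := by
  have hA : A ≠ 0 := by
    rintro rfl
    exact hAB.resolve_left (not_not.mpr rfl) (by simpa [hb.ne'] using h)
  have hAB' : A * B * b = -(a * A ^ 2) := by linear_combination A * h
  by_contra! hc
  nlinarith [mul_nonneg hc hb.le, mul_pos ha (pow_pos (abs_pos.mpr hA) 2), sq_abs A]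

theorem Real.sign_eq_sign_iff {a b : ℝ} :
    Real.sign a = Real.sign b ↔ SignType.sign a = SignType.sign b := by
  rcases lt_trichotomy a 0 with ha | rfl | ha <;> rcases lt_trichotomy b 0 with hb | rfl | hb <;>
    simp [Real.sign_of_neg, Real.sign_of_pos, sign_pos, *] <;> norm_num

theorem Fin.exists_ne_and_ne (i j : Fin 3) : ∃ l, l ≠ i ∧ l ≠ j := by
  revert i j; decide

theorem Fin.exists_ne_and_ne_and_ne (l : Fin 3) : ∃ i j, i ≠ j ∧ i ≠ l ∧ j ≠ l := by
  revert l; decide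

theorem Fin.eq_or_eq_or_eq_of_ne {i j l : Fin 3} (hij : i ≠ j) (hil : i ≠ l) (hjl : j ≠ l)
    (m : Fin 3) : m = i ∨ m = j ∨ m = l := by
  revert i j l m; decide

section Collinear

def NoThreeCollinear (k : Type*) {V P : Type*} [DivisionRing k] [AddCommGroup V] [Module k V]
    [AddTorsor V P] (S : Set P) : Prop :=
  ∀ x ∈ S, ∀ y ∈ S, ∀ z ∈ S, x ≠ y → x ≠ z → y ≠ z → ¬Collinear k ({x, y, z} : Set P)

theorem NoThreeCollinear.mono {k V P : Type*} [DivisionRing k] [AddCommGroup V] [Module k V]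
    [AddTorsor V P] {S T : Set P} (hT : NoThreeCollinear k T) (h : S ⊆ T) :
    NoThreeCollinear k S :=
  fun x hx y hy z hz => hT x (h hx) y (h hy) z (h hz)

variable {E : Type*} [AddCommGroup E] [Module ℝ E] {S : Set E}

theorem NoThreeCollinear.eq_or_eq_of_mem_segment (hS : NoThreeCollinear ℝ S) {x y v : E}
    (hx : x ∈ S) (hy : y ∈ S) (hv : v ∈ S) (hxy : x ≠ y) (hxyv : v ∈ segment ℝ x y) :
    v = x ∨ v = y := by
  by_contra! h
  exact hS v hv x hx y hy h.1 h.2 hxy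
    (collinear_insert_of_mem_affineSpan_pair (mem_segment_iff_wbtw.mp hxyv).mem_affineSpan)

theorem NoThreeCollinear.notMem_openSegment (hS : NoThreeCollinear ℝ S) {x y v : E}
    (hx : x ∈ S) (hy : y ∈ S) (hv : v ∈ S) (hxy : x ≠ y) : v ∉ openSegment ℝ x y := by
  intro hxyv
  rcases hS.eq_or_eq_of_mem_segment hx hy hv hxy (openSegment_subset_segment ℝ x y hxyv)
    with rfl | rfl
  · exact hxy (left_mem_openSegment_iff.mp hxyv)
  · exact hxy (right_mem_openSegment_iff.mp hxyv)

end Collinear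

section Orientation

theorem eq_smul_of_detp_eq_zero {u w : ℝ × ℝ} (hu : u ≠ 0) (h : detp u w = 0) :
    w = ((u.1 * w.1 + u.2 * w.2) / (u.1 ^ 2 + u.2 ^ 2)) • u := by
  obtain ⟨a, b⟩ := u
  obtain ⟨c, d⟩ := w
  have hn : a ^ 2 + b ^ 2 ≠ 0 := by
    contrapose! hu
    ext <;> simp <;> nlinarith [sq_nonneg a, sq_nonneg b]
  simp only [detp] at h
  ext <;> simp <;> field_simp
  · linear_combination -b * h
  · linear_combination a * h

theorem collinear_of_detp_eq_zero {x y z : ℝ × ℝ} (h : detp (y - x) (z - x) = 0) :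
    Collinear ℝ ({x, y, z} : Set (ℝ × ℝ)) := by
  obtain rfl | hxy := eq_or_ne y x
  · simpa using collinear_pair ℝ y z
  rw [collinear_iff_of_mem (mem_insert x _)]
  refine ⟨y - x, ?_⟩
  simp only [mem_insert_iff, mem_singleton_iff, forall_eq_or_imp, forall_eq]
  exact ⟨⟨0, by simp⟩, ⟨1, by simp⟩,
    ⟨_, eq_add_of_sub_eq (eq_smul_of_detp_eq_zero (sub_ne_zero.mpr hxy) h)⟩⟩

theorem NoThreeCollinear.detp_ne_zero {S : Set (ℝ × ℝ)} (hS : NoThreeCollinear ℝ S)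
    {x y z : ℝ × ℝ} (hx : x ∈ S) (hy : y ∈ S) (hz : z ∈ S) (hxy : x ≠ y) (hxz : x ≠ z)
    (hyz : y ≠ z) : detp (y - x) (z - x) ≠ 0 :=
  fun h => hS x hx y hy z hz hxy hxz hyz (collinear_of_detp_eq_zero h)

theorem detp_smul_add_smul_sub {v o u w : ℝ × ℝ} {a b : ℝ} (hab : a + b = 1) :
    detp v (a • u + b • w - o) = a * detp v (u - o) + b * detp v (w - o) := by
  obtain rfl := eq_sub_of_add_eq' hab
  simp only [detp, Prod.fst_sub, Prod.snd_sub, Prod.fst_add, Prod.snd_add, Prod.smul_fst,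
    Prod.smul_snd, smul_eq_mul]
  ring

noncomputable def orient (x y z : ℝ × ℝ) : SignType := SignType.sign (detp (y - x) (z - x))

theorem orient_comp_eq {S : Set (ℝ × ℝ)} {f : ℝ × ℝ → ℝ × ℝ}
    (h : ∀ x ∈ S, ∀ y ∈ S, ∀ z ∈ S, x ≠ y → x ≠ z → y ≠ z →
      Real.sign (detp (y - x) (z - x)) = Real.sign (detp (f y - f x) (f z - f x)))
    {x y z : ℝ × ℝ} (hx : x ∈ S) (hy : y ∈ S) (hz : z ∈ S) :
    orient (f x) (f y) (f z) = orient x y z := by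
  by_cases hxy : x = y
  · simp [orient, detp, hxy]
  by_cases hxz : x = z
  · simp [orient, detp, hxz]
  by_cases hyz : y = z
  · simp [orient, detp, hyz, mul_comm]
  exact (Real.sign_eq_sign_iff.mp (h x hx y hy z hz hxy hxz hyz)).symm

def SegmentsCross (x y u w : ℝ × ℝ) : Prop :=
  orient x y u * orient x y w = -1 ∧ orient u w x * orient u w y = -1

theorem segmentsCross_iff {x y u w : ℝ × ℝ} :
    SegmentsCross x y u w ↔
      detp (y - x) (u - x) * detp (y - x) (w - x) < 0 ∧
        detp (w - u) (x - u) * detp (w - u) (y - u) < 0 := by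
  simp only [SegmentsCross, orient, ← sign_mul, sign_eq_neg_one_iff]

theorem segmentsCross_of_mem_openSegment {S : Set (ℝ × ℝ)} (hS : NoThreeCollinear ℝ S)
    {x y u w p : ℝ × ℝ} (hx : x ∈ S) (hy : y ∈ S) (hu : u ∈ S) (hw : w ∈ S) (hxy : x ≠ y)
    (huw : u ≠ w) (hxu : x ≠ u) (hxw : x ≠ w) (hp : p ∈ openSegment ℝ x y)
    (hp' : p ∈ openSegment ℝ u w) : SegmentsCross x y u w := by
  obtain ⟨a, b, ha, hb, hab, rfl⟩ := hp
  obtain ⟨a', b', ha', hb', hab', hp'⟩ := hp'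
  have hline : detp (y - x) (a • x + b • y - x) = 0 := by
    rw [detp_smul_add_smul_sub hab]; simp only [detp, sub_self, Prod.fst_zero, Prod.snd_zero]; ring
  have hline' : detp (w - u) (a' • u + b' • w - u) = 0 := by
    rw [detp_smul_add_smul_sub hab']; simp only [detp, sub_self, Prod.fst_zero, Prod.snd_zero]; ring
  rw [segmentsCross_iff]
  constructor
  · rw [← hp', detp_smul_add_smul_sub hab'] at hline
    refine mul_neg_of_mul_add_mul_eq_zero ha' hb' hline ?_
    obtain rfl | huy := eq_or_ne u y
    · exact Or.inr (hS.detp_ne_zero hx hu hw hxu hxw huw)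
    · exact Or.inl (hS.detp_ne_zero hx hy hu hxy hxu huy.symm)
  · rw [hp', detp_smul_add_smul_sub hab] at hline'
    exact mul_neg_of_mul_add_mul_eq_zero ha hb hline'
      (Or.inl (hS.detp_ne_zero hu hw hx huw hxu.symm hxw.symm))

theorem SegmentsCross.exists_mem_openSegment {x y u w : ℝ × ℝ} (h : SegmentsCross x y u w) :
    ∃ p, p ∈ openSegment ℝ x y ∧ p ∈ openSegment ℝ u w := by
  rw [segmentsCross_iff] at h
  set A := detp (w - u) (x - u)
  set B := detp (w - u) (y - u)
  set C := detp (y - x) (u - x)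
  set D := detp (y - x) (w - x)
  -- The lines meet at `lineMap x y (A / (A - B))`; by the linear relation `h₁`, `h₂` between the
  -- four points this is also `lineMap u w (C / (C - D))`.
  have h₁ : B * x.1 - A * y.1 + D * u.1 - C * w.1 = 0 := by simp only [A, B, C, D, detp]; simp; ring
  have h₂ : B * x.2 - A * y.2 + D * u.2 - C * w.2 = 0 := by simp only [A, B, C, D, detp]; simp; ring
  have hD : D = C - B + A := by simp only [A, B, C, D, detp]; simp; ring
  have hAB : A - B ≠ 0 := fun h0 => by
    have := h.2
    rw [show B = A by linarith] at this
    nlinarith [mul_self_nonneg A]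
  simp only [openSegment_eq_image_lineMap]
  refine ⟨_, ⟨_, div_sub_mem_Ioo_of_mul_neg h.2, rfl⟩, _, div_sub_mem_Ioo_of_mul_neg h.1, ?_⟩
  clear_value A B C D
  subst hD
  have hBA : C - (C - B + A) ≠ 0 := fun h0 => hAB (by linarith)
  ext <;> simp only [AffineMap.lineMap_apply_module, Prod.fst_add, Prod.snd_add, Prod.smul_fst,
    Prod.smul_snd, smul_eq_mul] <;> field_simp
  · linear_combination (B - A) * h₁
  · linear_combination (B - A) * h₂

end Orientation

namespace AffineBasis

section Segment

variable {ι E : Type*} [AddCommGroup E] [Module ℝ E] (b : AffineBasis ι ℝ E)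

theorem coord_eq_zero_of_mem_segment {i j l : ι} (hi : l ≠ i) (hj : l ≠ j) {q : E}
    (hq : q ∈ segment ℝ (b i) (b j)) : b.coord l q = 0 := by
  rw [segment_eq_image_lineMap] at hq
  obtain ⟨t, -, rfl⟩ := hq
  simp [AffineMap.apply_lineMap, b.coord_apply_ne hi, b.coord_apply_ne hj]

theorem coord_pos_of_mem_openSegment {i j : ι} (hij : i ≠ j) {q : E}
    (hq : q ∈ openSegment ℝ (b i) (b j)) : 0 < b.coord i q := by
  rw [openSegment_eq_image_lineMap] at hq
  obtain ⟨t, ht, rfl⟩ := hq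
  rw [AffineMap.apply_lineMap, b.coord_apply_eq, b.coord_apply_ne hij,
    AffineMap.lineMap_apply_module]
  simp only [smul_eq_mul, mul_one, mul_zero, add_zero, sub_pos]
  exact ht.2

end Segment

section Triangle

variable {E : Type*} [NormedAddCommGroup E] [NormedSpace ℝ E]

theorem exists_lineMap_mem_interior_convexHull {ι : Type*} [Finite ι] (b : AffineBasis ι ℝ E)
    {p z : E} (h : ∀ m, 0 ≤ b.coord m p ∧ (0 < b.coord m p ∨ 0 < b.coord m z)) :
    ∃ t ∈ Ioo (0 : ℝ) 1, AffineMap.lineMap p z t ∈ interior (convexHull ℝ (range b)) := by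
  obtain ⟨t, ht, ht₀, ht₁⟩ := ((eventually_all.2 fun m => eventually_pos_lineMap (h m).1
    (h m).2).and (Ioo_mem_nhdsGT one_pos)).exists
  refine ⟨t, ⟨ht₀, ht₁⟩, ?_⟩
  rw [b.interior_convexHull]
  intro m
  rw [AffineMap.apply_lineMap]
  exact ht m

variable (b : AffineBasis (Fin 3) ℝ E)

theorem notMem_interior_convexHull_of_mem_segment (i j : Fin 3) {q : E}
    (hq : q ∈ segment ℝ (b i) (b j)) : q ∉ interior (convexHull ℝ (range b)) := by
  obtain ⟨l, hli, hlj⟩ := Fin.exists_ne_and_ne i j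
  rw [b.interior_convexHull]
  exact fun h => (h l).ne' (b.coord_eq_zero_of_mem_segment hli hlj hq)

theorem exists_mem_segment_of_mem_frontier {q : E}
    (hq : q ∈ convexHull ℝ (range b) \ interior (convexHull ℝ (range b))) :
    ∃ i j, i ≠ j ∧ q ∈ segment ℝ (b i) (b j) := by
  rw [b.interior_convexHull, b.convexHull_eq_nonneg_coord] at hq
  obtain ⟨hq, hq'⟩ := hq
  simp only [mem_ofPred_eq, not_forall, not_lt] at hq hq'
  obtain ⟨l, hl⟩ := hq'
  have hl0 := le_antisymm hl (hq l)
  have hsum := b.sum_coord_apply_eq_one q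
  have hcomb := b.linear_combination_coord_eq_self q
  rw [Fin.sum_univ_three] at hsum hcomb
  fin_cases l
  · exact ⟨1, 2, by decide, _, _, hq 1, hq 2, by simp_all, by simp_all⟩
  · exact ⟨0, 2, by decide, _, _, hq 0, hq 2, by simp_all, by simp_all⟩
  · exact ⟨0, 1, by decide, _, _, hq 0, hq 1, by simp_all, by simp_all⟩

theorem notMem_convexHull {S : Set E} (hS : NoThreeCollinear ℝ S) (hb : range b ⊆ S) {v : E}
    (hvS : v ∈ S) (hv : v ∉ range b) (hvi : v ∉ interior (convexHull ℝ (range b))) :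
    v ∉ convexHull ℝ (range b) := by
  intro hvc
  obtain ⟨i, j, hij, hvij⟩ := b.exists_mem_segment_of_mem_frontier ⟨hvc, hvi⟩
  rcases hS.eq_or_eq_of_mem_segment (hb (mem_range_self i)) (hb (mem_range_self j)) hvS
    (b.ind.injective.ne hij) hvij with rfl | rfl <;> exact hv (mem_range_self _)

end Triangle

section Plane

theorem detp_sub_eq_sum_coord {ι : Type*} [Fintype ι] (b : AffineBasis ι ℝ (ℝ × ℝ))
    (v o q : ℝ × ℝ) : detp v (q - o) = ∑ i, b.coord i q * detp v (b i - o) := by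
  have hq : ∑ i, b.coord i q • (b i - o) = q - o := by
    simp [smul_sub, Finset.sum_sub_distrib, ← Finset.sum_smul, b.sum_coord_apply_eq_one]
  rw [← hq]
  simp only [detp, Prod.fst_sum, Prod.snd_sum, Prod.smul_fst, Prod.smul_snd, smul_eq_mul,
    Finset.mul_sum, ← Finset.sum_sub_distrib]
  exact Finset.sum_congr rfl fun i _ => by ring

variable (b : AffineBasis (Fin 3) ℝ (ℝ × ℝ))

theorem detp_eq_coord_mul {i j l : Fin 3} (hij : i ≠ j) (hil : i ≠ l) (hjl : j ≠ l)
    (q : ℝ × ℝ) : detp (b j - b i) (q - b i) = b.coord l q * detp (b j - b i) (b l - b i) := by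
  rw [b.detp_sub_eq_sum_coord, Finset.sum_eq_single l _ (by simp)]
  intro m _ hml
  rcases Fin.eq_or_eq_or_eq_of_ne hij hil hjl m with rfl | rfl | rfl
  · simp [detp]
  · simp [detp, mul_comm]
  · exact absurd rfl hml

theorem orient_ne_zero {i j l : Fin 3} (hij : i ≠ j) (hil : i ≠ l) (hjl : j ≠ l) :
    orient (b i) (b j) (b l) ≠ 0 := by
  rw [orient, Ne, sign_eq_zero_iff]
  intro h
  have hsub : range b ⊆ {b i, b j, b l} := by
    rintro _ ⟨m, rfl⟩
    rcases Fin.eq_or_eq_or_eq_of_ne hij hil hjl m with rfl | rfl | rfl <;> simp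
  exact affineIndependent_iff_not_collinear.mp b.ind ((collinear_of_detp_eq_zero h).subset hsub)

theorem mem_interior_convexHull_iff_orient (q : ℝ × ℝ) :
    q ∈ interior (convexHull ℝ (range b)) ↔
      ∀ i j l, i ≠ j → i ≠ l → j ≠ l → orient (b i) (b j) q = orient (b i) (b j) (b l) := by
  have key {i j l : Fin 3} (hij : i ≠ j) (hil : i ≠ l) (hjl : j ≠ l) :
      orient (b i) (b j) q = orient (b i) (b j) (b l) ↔ 0 < b.coord l q := by
    have hne := b.orient_ne_zero hij hil hjl
    rw [orient, b.detp_eq_coord_mul hij hil hjl, sign_mul, ← sign_eq_one_iff]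
    rw [orient] at hne ⊢
    generalize SignType.sign (detp (b j - b i) (b l - b i)) = s at hne ⊢
    generalize SignType.sign (b.coord l q) = t
    revert s t; decide
  rw [b.interior_convexHull, mem_ofPred_eq]
  refine ⟨fun h i j l hij hil hjl => (key hij hil hjl).mpr (h l), fun h l => ?_⟩
  obtain ⟨i, j, hij, hil, hjl⟩ := Fin.exists_ne_and_ne_and_ne l
  exact (key hij hil hjl).mp (h i j l hij hil hjl)

end Plane

end AffineBasis

section Overlap

variable {b₁ b₂ : AffineBasis (Fin 3) ℝ (ℝ × ℝ)}

theorem SegmentsCross.convexHull_inter_interior_nonempty {i i' j j' : Fin 3}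
    (h : SegmentsCross (b₁ i) (b₁ i') (b₂ j) (b₂ j')) :
    (convexHull ℝ (range b₁) ∩ interior (convexHull ℝ (range b₂))).Nonempty := by
  obtain ⟨p, hp₁, hp₂⟩ := h.exists_mem_openSegment
  have hjj : j ≠ j' := by
    rintro rfl
    simp [SegmentsCross, orient, detp] at h
  obtain ⟨l, hlj, hlj'⟩ := Fin.exists_ne_and_ne j j'
  -- Points just past the crossing towards the endpoint on the side of `b₂ l` are interior to `b₂`.
  have hside := (segmentsCross_iff.mp h).2
  rw [b₂.detp_eq_coord_mul hjj hlj.symm hlj'.symm (b₁ i),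
    b₂.detp_eq_coord_mul hjj hlj.symm hlj'.symm (b₁ i')] at hside
  obtain ⟨z, hz, hzl⟩ : ∃ z ∈ range b₁, 0 < b₂.coord l z := by
    by_contra! hneg
    nlinarith [mul_nonneg (mul_nonneg_of_nonpos_of_nonpos (hneg _ (mem_range_self i))
      (hneg _ (mem_range_self i'))) (mul_self_nonneg (detp (b₂ j' - b₂ j) (b₂ l - b₂ j)))]
  have hp : ∀ m, 0 ≤ b₂.coord m p ∧ (0 < b₂.coord m p ∨ 0 < b₂.coord m z) := by
    intro m
    rcases Fin.eq_or_eq_or_eq_of_ne hjj hlj.symm hlj'.symm m with hm | hm | hm <;> rw [hm]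
    · have := b₂.coord_pos_of_mem_openSegment hjj hp₂
      exact ⟨this.le, Or.inl this⟩
    · have := b₂.coord_pos_of_mem_openSegment hjj.symm (openSegment_symm ℝ (b₂ j) (b₂ j') ▸ hp₂)
      exact ⟨this.le, Or.inl this⟩
    · have := b₂.coord_eq_zero_of_mem_segment hlj hlj' (openSegment_subset_segment ℝ _ _ hp₂)
      exact ⟨this.ge, Or.inr hzl⟩
  obtain ⟨t, ht, hq⟩ := b₂.exists_lineMap_mem_interior_convexHull hp
  have hpT : p ∈ convexHull ℝ (range b₁) := segment_subset_convexHull (mem_range_self i)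
    (mem_range_self i') (openSegment_subset_segment ℝ _ _ hp₁)
  refine ⟨_, (convex_convexHull ℝ _).segment_subset hpT (subset_convexHull ℝ _ hz) ?_, hq⟩
  rw [segment_eq_image_lineMap]
  exact ⟨t, Ioo_subset_Icc_self ht, rfl⟩

variable (hS : NoThreeCollinear ℝ (range b₁ ∪ range b₂))
include hS

theorem exists_segmentsCross_of_notMem_convexHull {i i' : Fin 3} (hii : i ≠ i') {r : ℝ × ℝ}
    (hr : r ∈ openSegment ℝ (b₁ i') (b₁ i)) (hr₂ : r ∈ interior (convexHull ℝ (range b₂)))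
    (hi : b₁ i ∉ convexHull ℝ (range b₂)) :
    ∃ j j', SegmentsCross (b₁ i) (b₁ i') (b₂ j) (b₂ j') := by
  have mem₁ (k : Fin 3) : b₁ k ∈ range b₁ ∪ range b₂ := Or.inl (mem_range_self k)
  have mem₂ (k : Fin 3) : b₂ k ∈ range b₁ ∪ range b₂ := Or.inr (mem_range_self k)
  have hne₂ (k : Fin 3) : b₁ i ≠ b₂ k :=
    fun h => hi (h ▸ subset_convexHull ℝ _ (mem_range_self k))
  have hii' : b₁ i' ≠ b₁ i := b₁.ind.injective.ne hii.symm
  obtain ⟨s, hs, hsT⟩ := exists_mem_openSegment_diff_interior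
    ((finite_range b₂).isClosed_convexHull ℝ) hr₂ hi
  obtain ⟨j, j', hjj, hsjj⟩ := b₂.exists_mem_segment_of_mem_frontier hsT
  have hs₁ : s ∈ openSegment ℝ (b₁ i') (b₁ i) := by
    have hri : r ≠ b₁ i := fun h => hi (h ▸ interior_subset hr₂)
    have := (sbtw_of_mem_openSegment hr hii').trans_right (sbtw_of_mem_openSegment hs hri)
    rw [openSegment_eq_image_lineMap]
    exact this.mem_image_Ioo
  have hs_ne (k : Fin 3) : b₂ k ≠ s :=
    fun h => hS.notMem_openSegment (mem₁ i') (mem₁ i) (mem₂ k) hii' (h ▸ hs₁)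
  refine ⟨j, j', segmentsCross_of_mem_openSegment hS (mem₁ i) (mem₁ i') (mem₂ j) (mem₂ j')
    hii'.symm (b₂.ind.injective.ne hjj) (hne₂ j) (hne₂ j') (openSegment_symm ℝ (b₁ i) _ ▸ hs₁)
    (mem_openSegment_of_ne_left_right (hs_ne j) (hs_ne j') hsjj)⟩

theorem exists_vertex_or_segmentsCross_of_mem_openSegment {i i' : Fin 3} (hii : i ≠ i')
    {r : ℝ × ℝ} (hr : r ∈ openSegment ℝ (b₁ i) (b₁ i'))
    (hr₂ : r ∈ interior (convexHull ℝ (range b₂))) :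
    (∃ i, b₁ i ∈ interior (convexHull ℝ (range b₂))) ∨
      ∃ i i' j j', SegmentsCross (b₁ i) (b₁ i') (b₂ j) (b₂ j') := by
  by_cases hi : b₁ i ∈ interior (convexHull ℝ (range b₂))
  · exact Or.inl ⟨i, hi⟩
  by_cases hi' : b₁ i' ∈ interior (convexHull ℝ (range b₂))
  · exact Or.inl ⟨i', hi'⟩
  right
  have hout (k : Fin 3) (hk : b₁ k ∉ range b₂)
      (hki : b₁ k ∉ interior (convexHull ℝ (range b₂))) : b₁ k ∉ convexHull ℝ (range b₂) :=
    b₂.notMem_convexHull hS subset_union_right (Or.inl (mem_range_self k)) hk hki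
  have hnot : b₁ i ∉ range b₂ ∨ b₁ i' ∉ range b₂ := by
    by_contra! h
    obtain ⟨⟨j, hj⟩, j', hj'⟩ := h
    rw [← hj, ← hj'] at hr
    exact b₂.notMem_interior_convexHull_of_mem_segment j j'
      (openSegment_subset_segment ℝ _ _ hr) hr₂
  rcases hnot with h | h
  · obtain ⟨j, j', hc⟩ := exists_segmentsCross_of_notMem_convexHull hS hii
      (openSegment_symm ℝ (b₁ i) (b₁ i') ▸ hr) hr₂ (hout i h hi)
    exact ⟨i, i', j, j', hc⟩
  · obtain ⟨j, j', hc⟩ := exists_segmentsCross_of_notMem_convexHull hS hii.symm hr hr₂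
      (hout i' h hi')
    exact ⟨i', i, j, j', hc⟩

theorem exists_vertex_or_segmentsCross_of_mem_interior_inter {p : ℝ × ℝ}
    (hp₁ : p ∈ interior (convexHull ℝ (range b₁))) (hp₂ : p ∈ interior (convexHull ℝ (range b₂)))
    {j : Fin 3} (hj : b₂ j ∉ range b₁) :
    (∃ j, b₂ j ∈ interior (convexHull ℝ (range b₁))) ∨
      (∃ i, b₁ i ∈ interior (convexHull ℝ (range b₂))) ∨
        ∃ i i' j j', SegmentsCross (b₁ i) (b₁ i') (b₂ j) (b₂ j') := by
  by_cases hji : b₂ j ∈ interior (convexHull ℝ (range b₁))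
  · exact Or.inl ⟨j, hji⟩
  right
  have hjT := b₁.notMem_convexHull hS subset_union_left (Or.inr (mem_range_self j)) hj hji
  obtain ⟨r, hr, hrT⟩ := exists_mem_openSegment_diff_interior
    ((finite_range b₁).isClosed_convexHull ℝ) hp₁ hjT
  have hr₂ : r ∈ interior (convexHull ℝ (range b₂)) :=
    (convex_convexHull ℝ _).openSegment_interior_self_subset_interior hp₂
      (subset_convexHull ℝ _ (mem_range_self j)) hr
  obtain ⟨i, i', hii, hrii⟩ := b₁.exists_mem_segment_of_mem_frontier hrT
  by_cases hri : r = b₁ i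
  · exact Or.inl ⟨i, hri ▸ hr₂⟩
  by_cases hri' : r = b₁ i'
  · exact Or.inl ⟨i', hri' ▸ hr₂⟩
  exact exists_vertex_or_segmentsCross_of_mem_openSegment hS hii
    (mem_openSegment_of_ne_left_right (Ne.symm hri) (Ne.symm hri') hrii) hr₂

end Overlap

def CombinatorialOverlap (b₁ b₂ : AffineBasis (Fin 3) ℝ (ℝ × ℝ)) : Prop :=
  range b₁ = range b₂ ∨ (∃ j, b₂ j ∈ interior (convexHull ℝ (range b₁))) ∨
    (∃ i, b₁ i ∈ interior (convexHull ℝ (range b₂))) ∨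
      ∃ i i' j j', SegmentsCross (b₁ i) (b₁ i') (b₂ j) (b₂ j')

theorem interior_inter_nonempty_iff_combinatorialOverlap {b₁ b₂ : AffineBasis (Fin 3) ℝ (ℝ × ℝ)}
    (hS : NoThreeCollinear ℝ (range b₁ ∪ range b₂)) :
    (interior (convexHull ℝ (range b₁)) ∩ interior (convexHull ℝ (range b₂))).Nonempty ↔
      CombinatorialOverlap b₁ b₂ := by
  constructor
  · rintro ⟨p, hp₁, hp₂⟩
    by_cases h₂₁ : range b₂ ⊆ range b₁
    · by_cases h₁₂ : range b₁ ⊆ range b₂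
      · exact Or.inl (h₁₂.antisymm h₂₁)
      obtain ⟨_, ⟨i, rfl⟩, hi⟩ := not_subset.mp h₁₂
      rcases exists_vertex_or_segmentsCross_of_mem_interior_inter (union_comm _ _ ▸ hS) hp₂ hp₁ hi
        with h | h | ⟨i, i', j, j', h⟩
      · exact Or.inr (Or.inr (Or.inl h))
      · exact Or.inr (Or.inl h)
      · exact Or.inr (Or.inr (Or.inr ⟨j, j', i, i', h.symm⟩))
    · obtain ⟨_, ⟨j, rfl⟩, hj⟩ := not_subset.mp h₂₁
      exact Or.inr (exists_vertex_or_segmentsCross_of_mem_interior_inter hS hp₁ hp₂ hj)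
  · have hne₁ : (interior (convexHull ℝ (range b₁))).Nonempty :=
      ⟨_, b₁.centroid_mem_interior_convexHull⟩
    have hne₂ : (interior (convexHull ℝ (range b₂))).Nonempty :=
      ⟨_, b₂.centroid_mem_interior_convexHull⟩
    rintro (h | ⟨j, hj⟩ | ⟨i, hi⟩ | ⟨i, i', j, j', h⟩)
    · rwa [h, inter_self]
    · rw [inter_comm]
      exact (convex_convexHull ℝ _).interior_inter_nonempty_of_inter_nonempty hne₂ isOpen_interior
        ⟨_, subset_convexHull ℝ _ (mem_range_self j), hj⟩
    · exact (convex_convexHull ℝ _).interior_inter_nonempty_of_inter_nonempty hne₁ isOpen_interior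
        ⟨_, subset_convexHull ℝ _ (mem_range_self i), hi⟩
    · exact (convex_convexHull ℝ _).interior_inter_nonempty_of_inter_nonempty hne₁ isOpen_interior
        h.convexHull_inter_interior_nonempty

section Map

variable {S : Set (ℝ × ℝ)} {f : ℝ × ℝ → ℝ × ℝ}
  (horient : ∀ x ∈ S, ∀ y ∈ S, ∀ z ∈ S, orient (f x) (f y) (f z) = orient x y z)
include horient

theorem mem_interior_convexHull_map_iff {b b' : AffineBasis (Fin 3) ℝ (ℝ × ℝ)} (hb : range b ⊆ S)
    (hb' : ∀ i, b' i = f (b i)) {q : ℝ × ℝ} (hq : q ∈ S) :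
    f q ∈ interior (convexHull ℝ (range b')) ↔ q ∈ interior (convexHull ℝ (range b)) := by
  have hbS (i : Fin 3) : b i ∈ S := hb (mem_range_self i)
  simp only [AffineBasis.mem_interior_convexHull_iff_orient, hb',
    horient _ (hbS _) _ (hbS _) _ hq, horient _ (hbS _) _ (hbS _) _ (hbS _)]

theorem segmentsCross_map_iff {x y u w : ℝ × ℝ} (hx : x ∈ S) (hy : y ∈ S) (hu : u ∈ S)
    (hw : w ∈ S) : SegmentsCross (f x) (f y) (f u) (f w) ↔ SegmentsCross x y u w := by
  rw [SegmentsCross, SegmentsCross, horient x hx y hy u hu, horient x hx y hy w hw,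
    horient u hu w hw x hx, horient u hu w hw y hy]

theorem combinatorialOverlap_map_iff (hf : InjOn f S)
    {b₁ b₂ b₁' b₂' : AffineBasis (Fin 3) ℝ (ℝ × ℝ)} (hb₁ : range b₁ ⊆ S) (hb₂ : range b₂ ⊆ S)
    (hb₁' : ∀ i, b₁' i = f (b₁ i)) (hb₂' : ∀ i, b₂' i = f (b₂ i)) :
    CombinatorialOverlap b₁' b₂' ↔ CombinatorialOverlap b₁ b₂ := by
  have hrange {b b' : AffineBasis (Fin 3) ℝ (ℝ × ℝ)} (hb' : ∀ i, b' i = f (b i)) :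
      range b' = f '' range b := by
    rw [← range_comp]; exact congrArg range (funext hb')
  refine or_congr ?_ (or_congr ?_ (or_congr ?_ ?_))
  · rw [hrange hb₁', hrange hb₂', hf.image_eq_image_iff hb₁ hb₂]
  · simp only [hb₂', mem_interior_convexHull_map_iff horient hb₁ hb₁' (hb₂ (mem_range_self _))]
  · simp only [hb₁', mem_interior_convexHull_map_iff horient hb₂ hb₂' (hb₁ (mem_range_self _))]
  · simp only [hb₁', hb₂', segmentsCross_map_iff horient (hb₁ (mem_range_self _))
      (hb₁ (mem_range_self _)) (hb₂ (mem_range_self _)) (hb₂ (mem_range_self _))]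

end Map

section OfNotCollinear

variable {k V P : Type*} [Field k] [AddCommGroup V] [Module k V] [AddTorsor V P]
  [FiniteDimensional k V] (hV : Module.finrank k V = 2) {x y z : P}
  (h : ¬Collinear k ({x, y, z} : Set P))

def affineBasisOfNotCollinear : AffineBasis (Fin 3) k P :=
  ⟨![x, y, z], affineIndependent_iff_not_collinear_set.mpr h, by
    rw [AffineIndependent.affineSpan_eq_top_iff_card_eq_finrank_add_one
      (affineIndependent_iff_not_collinear_set.mpr h), hV, Fintype.card_fin]⟩

theorem range_affineBasisOfNotCollinear : range (affineBasisOfNotCollinear hV h) = {x, y, z} := by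
  change range ![x, y, z] = _
  simp only [Matrix.range_cons, Matrix.range_empty, union_empty, singleton_union]

theorem range_affineBasisOfNotCollinear_subset {S : Set P} (hx : x ∈ S) (hy : y ∈ S)
    (hz : z ∈ S) : range (affineBasisOfNotCollinear hV h) ⊆ S := by
  rw [range_affineBasisOfNotCollinear]
  exact insert_subset hx (insert_subset hy (singleton_subset_iff.mpr hz))

end OfNotCollinear

theorem orientation_preserving_bijection_preserves_intersection
    (P Q : Finset (ℝ × ℝ)) (hP : StrictConvexPos P) (hQ : StrictConvexPos Q)
    (f : ℝ × ℝ → ℝ × ℝ) (hf : Set.BijOn f (P : Set (ℝ × ℝ)) (Q : Set (ℝ × ℝ)))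
    (horient : ∀ a ∈ P, ∀ b ∈ P, ∀ c ∈ P, a ≠ b → a ≠ c → b ≠ c →
      Real.sign (detp (b - a) (c - a)) = Real.sign (detp (f b - f a) (f c - f a)))
    (a b c d e g : ℝ × ℝ)
    (haP : a ∈ P) (hbP : b ∈ P) (hcP : c ∈ P)
    (hdP : d ∈ P) (heP : e ∈ P) (hgP : g ∈ P)
    (hab : a ≠ b) (hac : a ≠ c) (hbc : b ≠ c)
    (hde : d ≠ e) (hdg : d ≠ g) (heg : e ≠ g) :
    (interior (convexHull ℝ ({a, b, c} : Set (ℝ × ℝ))) ∩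
        interior (convexHull ℝ ({d, e, g} : Set (ℝ × ℝ)))).Nonempty ↔
      (interior (convexHull ℝ ({f a, f b, f c} : Set (ℝ × ℝ))) ∩
        interior (convexHull ℝ ({f d, f e, f g} : Set (ℝ × ℝ)))).Nonempty := by
  have hP' : NoThreeCollinear ℝ (P : Set (ℝ × ℝ)) := hP.1
  have hQ' : NoThreeCollinear ℝ (Q : Set (ℝ × ℝ)) := hQ.1
  have h2 : Module.finrank ℝ (ℝ × ℝ) = 2 := by simp
  have hfne {x y : ℝ × ℝ} (hx : x ∈ P) (hy : y ∈ P) (hxy : x ≠ y) : f x ≠ f y :=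
    hf.injOn.ne hx hy hxy
  have habc := hP' a haP b hbP c hcP hab hac hbc
  have hdeg := hP' d hdP e heP g hgP hde hdg heg
  have habc' := hQ' _ (hf.mapsTo haP) _ (hf.mapsTo hbP) _ (hf.mapsTo hcP)
    (hfne haP hbP hab) (hfne haP hcP hac) (hfne hbP hcP hbc)
  have hdeg' := hQ' _ (hf.mapsTo hdP) _ (hf.mapsTo heP) _ (hf.mapsTo hgP)
    (hfne hdP heP hde) (hfne hdP hgP hdg) (hfne heP hgP heg)
  have hB₁ := range_affineBasisOfNotCollinear_subset h2 habc haP hbP hcP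
  have hB₂ := range_affineBasisOfNotCollinear_subset h2 hdeg hdP heP hgP
  have hB₁' := range_affineBasisOfNotCollinear_subset h2 habc'
    (hf.mapsTo haP) (hf.mapsTo hbP) (hf.mapsTo hcP)
  have hB₂' := range_affineBasisOfNotCollinear_subset h2 hdeg'
    (hf.mapsTo hdP) (hf.mapsTo heP) (hf.mapsTo hgP)
  rw [← range_affineBasisOfNotCollinear h2 habc, ← range_affineBasisOfNotCollinear h2 hdeg,
    ← range_affineBasisOfNotCollinear h2 habc', ← range_affineBasisOfNotCollinear h2 hdeg',
    interior_inter_nonempty_iff_combinatorialOverlap (hP'.mono (union_subset hB₁ hB₂)),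
    interior_inter_nonempty_iff_combinatorialOverlap (hQ'.mono (union_subset hB₁' hB₂'))]
  exact (combinatorialOverlap_map_iff (fun x hx y hy z hz => orient_comp_eq horient hx hy hz)
    hf.injOn hB₁ hB₂ (fun i => by fin_cases i <;> rfl) (fun i => by fin_cases i <;> rfl)).symm
end
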